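/- arXiv:1507.06070 — 9 statements merged into one kernel-verified Lean document; each statement's English description precedes it below -/
import Mathlib

section
/- Let w be a word in a DFA with |Q| − |δ(Q,w)| = 1, and let S₁ ≠ S₂ be subsets of Q of equal size k such that both contain the 2-element preimage δ⁻¹(q^c,w) of the contracting state q^c and both have images of size k − 1 under w. Then δ(S₁,w) ≠ δ(S₂,w). -/
def dfaRun {Q A : Type*} (δ : Q → A → Q) (q : Q) (w : List A) : Q := w.foldl δ q

theorem fiber_le_one {Q A : Type*} [Fintype Q] [DecidableEq Q]
    (δ : Q → A → Q) (w : List A) (qc : Q)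
    (hdef : (Finset.univ.image (fun p => dfaRun δ p w)).card + 1 = Fintype.card Q)
    (hqc : (Finset.univ.filter (fun p => dfaRun δ p w = qc)).card = 2)
    (b : Q) (hb : b ≠ qc) :
    (Finset.univ.filter (fun p => dfaRun δ p w = b)).card ≤ 1 := by
  by_contra h
  push_neg at h
  have hmemT : ∀ q : Q, 1 ≤ (Finset.univ.filter (fun p => dfaRun δ p w = q)).card →
      q ∈ Finset.univ.image (fun p => dfaRun δ p w) := by
    intro q hq
    have hne : (Finset.univ.filter (fun p => dfaRun δ p w = q)).Nonempty := by
      rw [← Finset.card_pos]; omega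
    obtain ⟨p, hp⟩ := hne
    simp only [Finset.mem_filter] at hp
    exact hp.2 ▸ Finset.mem_image_of_mem _ (Finset.mem_univ p)
  have hsum : Finset.univ.card = ∑ q ∈ Finset.univ.image (fun p => dfaRun δ p w),
      (Finset.univ.filter (fun p => dfaRun δ p w = q)).card :=
    Finset.card_eq_sum_card_fiberwise
      (fun x _ => Finset.mem_image_of_mem (fun p => dfaRun δ p w) (Finset.mem_univ x))
  have hqcT : qc ∈ Finset.univ.image (fun p => dfaRun δ p w) := hmemT qc (by omega)
  have hbT : b ∈ Finset.univ.image (fun p => dfaRun δ p w) := hmemT b (by omega)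
  have hbT' : b ∈ (Finset.univ.image (fun p => dfaRun δ p w)).erase qc :=
    Finset.mem_erase.mpr ⟨hb, hbT⟩
  have h1 := (Finset.add_sum_erase (Finset.univ.image (fun p => dfaRun δ p w))
      (fun q => (Finset.univ.filter (fun p => dfaRun δ p w = q)).card) hqcT).symm
  have h2 := (Finset.add_sum_erase ((Finset.univ.image (fun p => dfaRun δ p w)).erase qc)
      (fun q => (Finset.univ.filter (fun p => dfaRun δ p w = q)).card) hbT').symm
  have h3 : (((Finset.univ.image (fun p => dfaRun δ p w)).erase qc).erase b).card • 1
      ≤ ∑ q ∈ ((Finset.univ.image (fun p => dfaRun δ p w)).erase qc).erase b,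
        (Finset.univ.filter (fun p => dfaRun δ p w = q)).card := by
    apply Finset.card_nsmul_le_sum
    intro x hx
    have hxT : x ∈ Finset.univ.image (fun p => dfaRun δ p w) :=
      Finset.mem_of_mem_erase (Finset.mem_of_mem_erase hx)
    obtain ⟨p, _, hp⟩ := Finset.mem_image.mp hxT
    have hpm : p ∈ Finset.univ.filter (fun p => dfaRun δ p w = x) := by
      simp [hp]
    have := Finset.card_pos.mpr ⟨p, hpm⟩
    omega
  have hcard1 : (((Finset.univ.image (fun p => dfaRun δ p w)).erase qc).erase b).card
      = (Finset.univ.image (fun p => dfaRun δ p w)).card - 2 := by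
    rw [Finset.card_erase_of_mem hbT', Finset.card_erase_of_mem hqcT]
    omega
  have huniv : Finset.univ.card = Fintype.card Q := Finset.card_univ
  have hTge : 2 ≤ (Finset.univ.image (fun p => dfaRun δ p w)).card := by
    have := Finset.card_le_card (Finset.insert_subset hqcT (Finset.singleton_subset_iff.mpr hbT))
    rwa [Finset.card_insert_of_notMem (by simp [Ne.symm hb]), Finset.card_singleton] at this
  simp only [smul_eq_mul, mul_one] at h3
  omega

theorem recover {Q A : Type*} [Fintype Q] [DecidableEq Q]
    (δ : Q → A → Q) (w : List A) (qc : Q) (k : ℕ) (S : Finset Q)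
    (hdef : (Finset.univ.image (fun p => dfaRun δ p w)).card + 1 = Fintype.card Q)
    (hqc : (Finset.univ.filter (fun p => dfaRun δ p w = qc)).card = 2)
    (hk : S.card = k)
    (hsub : Finset.univ.filter (fun p => dfaRun δ p w = qc) ⊆ S)
    (him : (S.image (fun q => dfaRun δ q w)).card = k - 1) :
    Finset.univ.filter (fun p => dfaRun δ p w ∈ S.image (fun q => dfaRun δ q w)) = S := by
  have hk2 : 2 ≤ k := by
    have := Finset.card_le_card hsub
    omega
  have hqcimg : qc ∈ S.image (fun q => dfaRun δ q w) := by
    have hne : (Finset.univ.filter (fun p => dfaRun δ p w = qc)).Nonempty := by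
      rw [← Finset.card_pos, hqc]; norm_num
    obtain ⟨p, hp⟩ := hne
    have hpS : p ∈ S := hsub hp
    simp only [Finset.mem_filter] at hp
    exact hp.2 ▸ Finset.mem_image_of_mem _ hpS
  have hSsub : S ⊆ Finset.univ.filter (fun p => dfaRun δ p w ∈ S.image (fun q => dfaRun δ q w)) := by
    intro p hp
    simp only [Finset.mem_filter, Finset.mem_univ, true_and]
    exact Finset.mem_image_of_mem _ hp
  have hcardsum : (Finset.univ.filter (fun p => dfaRun δ p w ∈ S.image (fun q => dfaRun δ q w))).card
      = ∑ q ∈ S.image (fun q => dfaRun δ q w),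
        ((Finset.univ.filter (fun p => dfaRun δ p w ∈ S.image (fun q => dfaRun δ q w))).filter
          (fun p => dfaRun δ p w = q)).card := by
    apply Finset.card_eq_sum_card_fiberwise
    intro x hx
    simpa using hx
  have hbound : ∀ q ∈ S.image (fun q => dfaRun δ q w),
      ((Finset.univ.filter (fun p => dfaRun δ p w ∈ S.image (fun q => dfaRun δ q w))).filter
        (fun p => dfaRun δ p w = q)).card ≤ if q = qc then 2 else 1 := by
    intro q _
    have hsubfib : (Finset.univ.filter (fun p => dfaRun δ p w ∈ S.image (fun q => dfaRun δ q w))).filter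
        (fun p => dfaRun δ p w = q) ⊆ Finset.univ.filter (fun p => dfaRun δ p w = q) := by
      intro p hp
      simp only [Finset.mem_filter] at hp ⊢
      exact ⟨Finset.mem_univ p, hp.2⟩
    have hle := Finset.card_le_card hsubfib
    split
    · next heq => subst heq; omega
    · next hne => exact le_trans hle (fiber_le_one δ w qc hdef hqc q hne)
  have hsumle := Finset.sum_le_sum hbound
  have hsumite : ∑ q ∈ S.image (fun q => dfaRun δ q w), (if q = qc then (2:ℕ) else 1)
      = (S.image (fun q => dfaRun δ q w)).card + 1 := by
    rw [← Finset.add_sum_erase _ _ hqcimg, if_pos rfl]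
    have heq1 : ∑ q ∈ (S.image (fun q => dfaRun δ q w)).erase qc, (if q = qc then (2:ℕ) else 1)
        = ((S.image (fun q => dfaRun δ q w)).erase qc).card := by
      rw [Finset.sum_congr rfl (fun x hx => if_neg (Finset.mem_erase.mp hx).1)]
      simp
    rw [heq1, Finset.card_erase_of_mem hqcimg]
    have : 1 ≤ (S.image (fun q => dfaRun δ q w)).card := Finset.card_pos.mpr ⟨qc, hqcimg⟩
    omega
  refine (Finset.eq_of_subset_of_card_le hSsub ?_).symm
  rw [hcardsum, hk]
  omega

/-- `δ(·,w)` is injective on equal-size subsets containing the two-element preimage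
    of the contracting state of a `1`-deficient word `w`. -/
theorem stmt6 {Q A : Type*} [Fintype Q] [DecidableEq Q]
    (δ : Q → A → Q) (w : List A) (qc : Q) (k : ℕ) (S₁ S₂ : Finset Q)
    (hdef : (Finset.univ.image (fun p => dfaRun δ p w)).card + 1 = Fintype.card Q)
    (hqc : (Finset.univ.filter (fun p => dfaRun δ p w = qc)).card = 2)
    (hne : S₁ ≠ S₂) (hk₁ : S₁.card = k) (hk₂ : S₂.card = k)
    (hsub₁ : Finset.univ.filter (fun p => dfaRun δ p w = qc) ⊆ S₁)
    (hsub₂ : Finset.univ.filter (fun p => dfaRun δ p w = qc) ⊆ S₂)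
    (him₁ : (S₁.image (fun q => dfaRun δ q w)).card = k - 1)
    (him₂ : (S₂.image (fun q => dfaRun δ q w)).card = k - 1) :
    S₁.image (fun q => dfaRun δ q w) ≠ S₂.image (fun q => dfaRun δ q w) := by
  intro h
  apply hne
  rw [← recover δ w qc k S₁ hdef hqc hk₁ hsub₁ him₁,
      ← recover δ w qc k S₂ hdef hqc hk₂ hsub₂ him₂, h]
end

section
/- Let A = (Q, Σ, δ) be an n-state DFA with a 1-contracting collection W = {w₁,…,wₙ} (where wᵢ is 1-deficient excluding state qᵢ) such that the induced state map σ_W (sending each qᵢ to the contracting state of wᵢ) is a cyclic permutation of Q. Then every nonempty subset S of Q of size k is reachable from Q by a word of the form w_{i₁}…w_{i_{n−k}}, i.e., a concatenation of n − k words from W. -/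
def IsCyclicMap {Q : Type*} [Fintype Q] (σ : Q → Q) : Prop :=
  σ^[Fintype.card Q] = id ∧ ∀ q : Q, ∀ k : ℕ, 1 ≤ k → k < Fintype.card Q → σ^[k] q ≠ q

/-- A cyclic map on a nonempty finite type is injective. -/
lemma cyclic_injective {Q : Type*} [Fintype Q] [Nonempty Q] {σ : Q → Q}
    (hcyc : IsCyclicMap σ) : Function.Injective σ := by
  have hn : 1 ≤ Fintype.card Q := Fintype.card_pos
  intro a b hab
  have h : σ^[Fintype.card Q] a = σ^[Fintype.card Q] b := by
    rw [← Nat.sub_add_cancel hn, Function.iterate_succ_apply, Function.iterate_succ_apply, hab]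
  simpa [hcyc.1] using h

/-- Orbit of any point under a cyclic map covers everything. -/
lemma cyclic_orbit {Q : Type*} [Fintype Q] [Nonempty Q] {σ : Q → Q}
    (hcyc : IsCyclicMap σ) (t s : Q) : ∃ m : ℕ, σ^[m] t = s := by
  have hinj : Function.Injective σ := cyclic_injective hcyc
  have key : ∀ i j : Fin (Fintype.card Q), (i : ℕ) < (j : ℕ) →
      σ^[(i : ℕ)] t = σ^[(j : ℕ)] t → False := by
    intro i j hlt hij
    have hinj' : Function.Injective (σ^[(i : ℕ)]) := Function.Injective.iterate hinj _
    have hiter : σ^[(j : ℕ) - (i : ℕ)] t = t := by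
      apply hinj'
      rw [← Function.iterate_add_apply]
      have h : (i : ℕ) + ((j : ℕ) - (i : ℕ)) = (j : ℕ) := by omega
      rw [h]
      exact hij.symm
    exact hcyc.2 t ((j : ℕ) - (i : ℕ)) (by omega) (by omega) hiter
  have hg : Function.Injective (fun k : Fin (Fintype.card Q) => σ^[(k : ℕ)] t) := by
    intro i j hij
    by_contra hne
    rcases Nat.lt_or_ge (i : ℕ) (j : ℕ) with h | h
    · exact key i j h hij
    · have h2 : (j : ℕ) < (i : ℕ) := by
        rcases Nat.lt_or_ge (j : ℕ) (i : ℕ) with h' | h'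
        · exact h'
        · exact absurd (Fin.ext (by omega)) hne
      exact key j i h2 hij.symm
  have hbij : Function.Bijective (fun k : Fin (Fintype.card Q) => σ^[(k : ℕ)] t) :=
    (Fintype.bijective_iff_injective_and_card _).mpr ⟨hg, by simp⟩
  obtain ⟨m, hm⟩ := hbij.2 s
  exact ⟨(m : ℕ), hm⟩

/-- Boundary: a proper nonempty subset has an entering edge of the cycle. -/
lemma cyclic_boundary {Q : Type*} [Fintype Q] [DecidableEq Q] {σ : Q → Q}
    (hcyc : IsCyclicMap σ) (S : Finset Q) (hne : S.Nonempty) (hproper : S ≠ Finset.univ) :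
    ∃ q : Q, q ∉ S ∧ σ q ∈ S := by
  obtain ⟨s, hs⟩ := hne
  have : Nonempty Q := ⟨s⟩
  obtain ⟨t, ht⟩ : ∃ t : Q, t ∉ S := by
    by_contra h
    push_neg at h
    exact hproper (Finset.eq_univ_iff_forall.mpr h)
  obtain ⟨m, hm⟩ := cyclic_orbit hcyc t s
  clear hproper
  induction m generalizing t with
  | zero =>
    simp only [Function.iterate_zero_apply] at hm
    exact absurd (hm ▸ hs) ht
  | succ m ih =>
    by_cases h : σ t ∈ S
    · exact ⟨t, ht, h⟩
    · exact ih (σ t) h (by rwa [← Function.iterate_succ_apply])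

/-- In an aperiodically `1`-contracting DFA, every nonempty `k`-subset `S` of `Q`
    is reachable from `Q` by a concatenation of `n − k` words of the collection. -/
theorem stmt9 {Q A : Type*} [Fintype Q] [DecidableEq Q]
    (δ : Q → A → Q) (w : Q → List A) (σ : Q → Q)
    (hdef : ∀ q : Q, Finset.univ.image (fun p => dfaRun δ p (w q)) = Finset.univ \ {q})
    (hcontr : ∀ q : Q, (Finset.univ.filter (fun p => dfaRun δ p (w q) = σ q)).card = 2)
    (hcyc : IsCyclicMap σ)
    (S : Finset Q) (hS : S.Nonempty) :
    ∃ l : List Q, l.length = Fintype.card Q - S.card ∧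
      Finset.univ.image (fun p => dfaRun δ p (l.map w).flatten) = S := by
  obtain ⟨s0, hs0⟩ := hS
  have hQne : Nonempty Q := ⟨s0⟩
  suffices H : ∀ d : ℕ, ∀ S : Finset Q, S.Nonempty → S.card + d = Fintype.card Q →
      ∃ l : List Q, l.length = d ∧
        Finset.univ.image (fun p => dfaRun δ p (l.map w).flatten) = S by
    have hle : S.card ≤ Fintype.card Q := Finset.card_le_univ S
    exact H (Fintype.card Q - S.card) S ⟨s0, hs0⟩ (by omega)
  intro d
  induction d with
  | zero =>
    intro S hSne hcard
    have hSuniv : S = Finset.univ := Finset.eq_univ_of_card S (by omega)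
    subst hSuniv
    exact ⟨[], rfl, by simp [dfaRun]⟩
  | succ d ih =>
    intro S hSne hcard
    have hSlt : S.card < Fintype.card Q := by omega
    have hproper : S ≠ Finset.univ := by
      intro h; rw [h, Finset.card_univ] at hSlt; omega
    obtain ⟨q, hq, hσq⟩ := cyclic_boundary hcyc S hSne hproper
    set f : Q → Q := fun p => dfaRun δ p (w q) with hf
    set S' : Finset Q := Finset.univ.filter (fun p => f p ∈ S) with hS'
    -- fibers
    set fib : Q → ℕ := fun b => (Finset.univ.filter (fun p => f p = b)).card with hfib
    have hfibq : fib q = 0 := by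
      rw [hfib]
      simp only [Finset.card_eq_zero]
      rw [Finset.filter_eq_empty_iff]
      intro p _
      intro hpq
      have hmem : f p ∈ Finset.univ.image f := Finset.mem_image_of_mem f (Finset.mem_univ p)
      rw [hdef q] at hmem
      rw [hpq] at hmem
      simp at hmem
    have hfib1 : ∀ b : Q, b ≠ q → 1 ≤ fib b := by
      intro b hb
      have hmem : b ∈ Finset.univ.image f := by
        rw [hdef q]; simp [hb]
      obtain ⟨p, _, hp⟩ := Finset.mem_image.mp hmem
      apply Finset.card_pos.mpr
      exact ⟨p, by simp [hp]⟩
    have hfibσ : fib (σ q) = 2 := hcontr q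
    -- total sum
    have htot : ∑ b ∈ Finset.univ, fib b = Fintype.card Q := by
      rw [← Finset.card_univ]
      exact (Finset.card_eq_sum_card_fiberwise (f := f)
        (fun x _ => Finset.mem_univ (f x))).symm
    -- S'.card = sum of fibers over S
    have hS'card : S'.card = ∑ b ∈ S, fib b := by
      have h1 : S'.card = ∑ b ∈ S, (S'.filter (fun p => f p = b)).card :=
        Finset.card_eq_sum_card_fiberwise (f := f)
          (fun x hx => (Finset.mem_filter.mp hx).2)
      rw [h1]
      apply Finset.sum_congr rfl
      intro b hb
      congr 1
      ext p
      simp only [hS', Finset.mem_filter, Finset.mem_univ, true_and]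
      constructor
      · rintro ⟨_, h2⟩; exact h2
      · intro h2; exact ⟨h2 ▸ hb, h2⟩
    -- lower bound
    have hlb : S.card + 1 ≤ ∑ b ∈ S, fib b := by
      have hsplit : ∑ b ∈ S.erase (σ q), fib b + fib (σ q) = ∑ b ∈ S, fib b :=
        Finset.sum_erase_add S fib hσq
      have hge : (S.erase (σ q)).card ≤ ∑ b ∈ S.erase (σ q), fib b := by
        calc (S.erase (σ q)).card = ∑ _b ∈ S.erase (σ q), 1 := by
              simp
          _ ≤ ∑ b ∈ S.erase (σ q), fib b := by
              apply Finset.sum_le_sum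
              intro b hb
              apply hfib1
              intro hbq
              exact hq (hbq ▸ (Finset.mem_erase.mp hb).2)
      have hcer : (S.erase (σ q)).card = S.card - 1 := Finset.card_erase_of_mem hσq
      have hpos : 1 ≤ S.card := Finset.card_pos.mpr hSne
      omega
    -- upper bound
    have hub : ∑ b ∈ S, fib b ≤ S.card + 1 := by
      have hsplit : ∑ b ∈ Finset.univ \ S, fib b + ∑ b ∈ S, fib b
          = ∑ b ∈ Finset.univ, fib b := Finset.sum_sdiff (Finset.subset_univ S)
      have hqmem : q ∈ Finset.univ \ S := by simp [hq]
      have hsplit2 : ∑ b ∈ (Finset.univ \ S).erase q, fib b + fib q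
          = ∑ b ∈ Finset.univ \ S, fib b := Finset.sum_erase_add _ fib hqmem
      have hge : ((Finset.univ \ S).erase q).card ≤ ∑ b ∈ (Finset.univ \ S).erase q, fib b := by
        calc ((Finset.univ \ S).erase q).card = ∑ _b ∈ (Finset.univ \ S).erase q, 1 := by simp
          _ ≤ _ := by
              apply Finset.sum_le_sum
              intro b hb
              exact hfib1 b (Finset.mem_erase.mp hb).1
      have hcer : ((Finset.univ \ S).erase q).card = (Finset.univ \ S).card - 1 :=
        Finset.card_erase_of_mem hqmem
      have hcsd : (Finset.univ \ S).card = Fintype.card Q - S.card := by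
        rw [Finset.card_sdiff_of_subset (Finset.subset_univ S), Finset.card_univ]
      omega
    have hcardS' : S'.card = S.card + 1 := by omega
    -- image of S' under f is S
    have himg : S'.image f = S := by
      ext b
      simp only [Finset.mem_image]
      constructor
      · rintro ⟨p, hp, rfl⟩
        exact (Finset.mem_filter.mp hp).2
      · intro hb
        have hbq : b ≠ q := fun h => hq (h ▸ hb)
        have hmem : b ∈ Finset.univ.image f := by rw [hdef q]; simp [hbq]
        obtain ⟨p, _, hp⟩ := Finset.mem_image.mp hmem
        exact ⟨p, Finset.mem_filter.mpr ⟨Finset.mem_univ p, hp ▸ hb⟩, hp⟩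
    have hS'ne : S'.Nonempty := Finset.card_pos.mp (by omega)
    obtain ⟨l', hl'len, hl'img⟩ := ih S' hS'ne (by omega)
    refine ⟨l' ++ [q], by simp [hl'len], ?_⟩
    have hflat : ((l' ++ [q]).map w).flatten = (l'.map w).flatten ++ w q := by
      simp
    rw [hflat]
    have hrun : ∀ p : Q, dfaRun δ p ((l'.map w).flatten ++ w q)
        = f (dfaRun δ p (l'.map w).flatten) := by
      intro p
      simp [dfaRun, List.foldl_append, hf]
    calc Finset.univ.image (fun p => dfaRun δ p ((l'.map w).flatten ++ w q))
        = Finset.univ.image (fun p => f (dfaRun δ p (l'.map w).flatten)) := by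
          apply Finset.image_congr
          intro p _
          exact hrun p
      _ = (Finset.univ.image (fun p => dfaRun δ p (l'.map w).flatten)).image f := by
          rw [Finset.image_image]; rfl
      _ = S'.image f := by rw [hl'img]
      _ = S := himg
end

section
/- Let A be an n-state DFA that is aperiodically 1-contracting, i.e., it admits a 1-contracting collection W whose induced state map is a cyclic permutation of Q. Then A is synchronizing: there exists a word w and a state q with δ(p,w) = q for all p ∈ Q. Moreover, there is a synchronizing word that is a concatenation of n − 1 words from W. -/
section Aux

variable {Q : Type*} [Fintype Q] [DecidableEq Q]

/-- If the image of `g` is `univ \ {q}` and the fiber over `σq` has size 2 with `σq ≠ q`,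
then fibers over other points have size 1. -/
lemma fiber_one (g : Q → Q) (q sq : Q) (hsq : sq ≠ q)
    (himg : Finset.univ.image g = Finset.univ \ {q})
    (h2 : (Finset.univ.filter (fun p => g p = sq)).card = 2) :
    ∀ x, x ≠ q → x ≠ sq → (Finset.univ.filter (fun p => g p = x)).card = 1 := by
  intro x hxq hxsq
  have hmem : ∀ y : Q, y ≠ q → ∃ p, g p = y := by
    intro y hy
    have : y ∈ Finset.univ.image g := by
      rw [himg]; simp [hy]
    simpa using this
  have hfib0 : (Finset.univ.filter (fun p => g p = q)).card = 0 := by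
    rw [Finset.card_eq_zero]
    ext p; simp only [Finset.mem_filter, Finset.mem_univ, true_and, Finset.notMem_empty,
      iff_false]
    intro hp
    have : g p ∈ Finset.univ.image g := Finset.mem_image_of_mem _ (Finset.mem_univ p)
    rw [himg, hp] at this; simp at this
  have hpos : ∀ y, y ≠ q → 1 ≤ (Finset.univ.filter (fun p => g p = y)).card := by
    intro y hy
    obtain ⟨p, hp⟩ := hmem y hy
    exact Finset.card_pos.mpr ⟨p, by simp [hp]⟩
  -- total sum of fibers
  have htotal : Finset.univ.card = ∑ b ∈ Finset.univ, (Finset.univ.filter (fun p => g p = b)).card :=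
    Finset.card_eq_sum_card_fiberwise (fun x _ => Finset.mem_univ (g x))
  set s : Finset Q := (Finset.univ \ {q, sq}) with hs
  have hqmem : q ∉ s := by simp [hs]
  have hsqmem : sq ∉ s := by simp [hs]
  have huniv : Finset.univ = insert q (insert sq s) := by
    ext y; by_cases hy : y = q <;> by_cases hy2 : y = sq <;> simp [hs, hy, hy2]
  set F : Q → ℕ := fun b => (Finset.univ.filter (fun p => g p = b)).card with hF
  have hsum : ∑ b ∈ Finset.univ, F b = 0 + (2 + ∑ b ∈ s, F b) := by
    have hidx : ∑ b ∈ Finset.univ, F b = ∑ b ∈ insert q (insert sq s), F b := by rw [← huniv]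
    rw [hidx, Finset.sum_insert (by simp [hs, Ne.symm hsq]), Finset.sum_insert hsqmem]
    have hFq : F q = 0 := hfib0
    have hFsq : F sq = 2 := h2
    rw [hFq, hFsq]
  have hscard : s.card = Fintype.card Q - 2 := by
    rw [hs, Finset.card_sdiff_of_subset (by simp), Finset.card_univ,
      Finset.card_insert_of_notMem (by simpa using Ne.symm hsq), Finset.card_singleton]
  have hcard2 : 2 ≤ Fintype.card Q := by
    have : ({sq, q} : Finset Q) ⊆ Finset.univ := by simp
    calc 2 = ({sq, q} : Finset Q).card := by rw [Finset.card_insert_of_notMem (by simp [hsq])]; simp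
    _ ≤ Fintype.card Q := by rw [← Finset.card_univ]; exact Finset.card_le_card this
  have hsum_s : ∑ b ∈ s, F b = s.card := by
    have h1 : Fintype.card Q = 2 + ∑ b ∈ s, F b := by
      rw [← Finset.card_univ, htotal, hsum]; ring
    omega
  -- every fiber over s has card ≥ 1 and they sum to s.card, so each is 1
  by_contra hne
  have hxs : x ∈ s := by simp [hs, hxq, hxsq]
  have hposF : ∀ y, y ≠ q → 1 ≤ F y := hpos
  have hFx : (Finset.univ.filter (fun p => g p = x)).card = F x := rfl
  rw [hFx] at hne
  have hlt : ∑ b ∈ s, 1 < ∑ b ∈ s, F b := by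
    apply Finset.sum_lt_sum
    · intro i hi
      apply hposF
      intro h; rw [h] at hi; exact hqmem hi
    · refine ⟨x, hxs, ?_⟩
      have := hposF x hxq
      omega
  rw [Finset.sum_const, smul_eq_mul, mul_one, hsum_s] at hlt
  omega

end Aux

/-- An aperiodically `1`-contracting DFA is synchronizing; moreover some synchronizing
    word is a concatenation of `n − 1` words from the `1`-contracting collection. -/
theorem stmt10 {Q A : Type*} [Fintype Q] [DecidableEq Q] [Nonempty Q]
    (δ : Q → A → Q) (w : Q → List A) (σ : Q → Q)
    (hdef : ∀ q : Q, Finset.univ.image (fun p => dfaRun δ p (w q)) = Finset.univ \ {q})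
    (hcontr : ∀ q : Q, (Finset.univ.filter (fun p => dfaRun δ p (w q) = σ q)).card = 2)
    (hcyc : IsCyclicMap σ) :
    ∃ l : List Q, l.length = Fintype.card Q - 1 ∧
      ∃ q : Q, ∀ p : Q, dfaRun δ p (l.map w).flatten = q := by
  classical
  set n := Fintype.card Q with hn
  have hn1 : 1 ≤ n := Fintype.card_pos
  -- σ is bijective
  have hσsurj : Function.Surjective σ := by
    intro y
    obtain ⟨m, hm⟩ : ∃ m, n = m + 1 := ⟨n - 1, by omega⟩
    refine ⟨σ^[m] y, ?_⟩
    have := congrFun hcyc.1 y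
    rw [← hn, hm] at this
    rw [← Function.iterate_succ_apply' σ m y]
    simpa using this
  have hσinj : Function.Injective σ := Finite.injective_iff_surjective.mpr hσsurj
  -- key step: find q ∉ X with σ q ∈ X for proper nonempty X
  have hkey : ∀ X : Finset Q, X.Nonempty → X ≠ Finset.univ → ∃ q, q ∉ X ∧ σ q ∈ X := by
    intro X hX hXu
    by_contra hcon
    push_neg at hcon
    -- then σ⁻¹(X) ⊆ X, hence = X
    set T := Finset.univ.filter (fun q => σ q ∈ X) with hT
    have hTX : T ⊆ X := by
      intro q hq
      rw [hT, Finset.mem_filter] at hq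
      by_contra hqX
      exact hcon q hqX hq.2
    have hXT : X.card ≤ T.card := by
      -- X ⊆ T.image σ and σ injective
      have hsub : X ⊆ T.image σ := by
        intro x hx
        obtain ⟨q, hq⟩ := hσsurj x
        exact Finset.mem_image.mpr ⟨q, by rw [hT, Finset.mem_filter]; exact ⟨Finset.mem_univ q, hq ▸ hx⟩, hq⟩
      calc X.card ≤ (T.image σ).card := Finset.card_le_card hsub
        _ ≤ T.card := Finset.card_image_le
    have hTeq : T = X := Finset.eq_of_subset_of_card_le hTX hXT
    -- so X is σ-invariant
    have hinv : ∀ x ∈ X, σ x ∈ X := by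
      intro x hx
      have : x ∈ T := hTeq ▸ hx
      rw [hT, Finset.mem_filter] at this
      exact this.2
    have hinv' : ∀ k, ∀ x ∈ X, σ^[k] x ∈ X := by
      intro k
      induction k with
      | zero => intro x hx; simpa using hx
      | succ m ih =>
        intro x hx
        rw [Function.iterate_succ_apply]
        exact ih _ (hinv x hx)
    obtain ⟨x0, hx0⟩ := hX
    obtain ⟨y, hy⟩ : ∃ y, y ∉ X := by
      by_contra hc
      push_neg at hc
      exact hXu (Finset.eq_univ_iff_forall.mpr hc)
    -- orbit of x0 covers Q
    have horb : Function.Injective (fun k : Fin n => σ^[(k : ℕ)] x0) := by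
      intro i j hij
      have hij' : σ^[(i : ℕ)] x0 = σ^[(j : ℕ)] x0 := hij
      by_contra hne
      rcases Nat.lt_or_ge (i : ℕ) (j : ℕ) with h | h
      · have h2 : σ^[(j : ℕ) - (i : ℕ)] (σ^[(i : ℕ)] x0) = σ^[(i : ℕ)] x0 := by
          rw [← Function.iterate_add_apply]
          have heq : (j : ℕ) - (i : ℕ) + (i : ℕ) = (j : ℕ) := by omega
          rw [heq]
          exact hij'.symm
        exact hcyc.2 _ _ (by omega) (by have := j.2; omega) h2
      · have hlt : (j : ℕ) < (i : ℕ) := by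
          rcases Nat.lt_or_ge (j : ℕ) (i : ℕ) with h' | h'
          · exact h'
          · exact absurd (Fin.ext (by omega)) hne
        have h2 : σ^[(i : ℕ) - (j : ℕ)] (σ^[(j : ℕ)] x0) = σ^[(j : ℕ)] x0 := by
          rw [← Function.iterate_add_apply]
          have heq : (i : ℕ) - (j : ℕ) + (j : ℕ) = (i : ℕ) := by omega
          rw [heq]
          exact hij'
        exact hcyc.2 _ _ (by omega) (by have := i.2; omega) h2
    have hsurj : Function.Surjective (fun k : Fin n => σ^[(k : ℕ)] x0) := by
      have : Function.Bijective (fun k : Fin n => σ^[(k : ℕ)] x0) :=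
        (Fintype.bijective_iff_injective_and_card _).mpr ⟨horb, by simp [hn]⟩
      exact this.2
    obtain ⟨k, hk⟩ := hsurj y
    exact hy (hk ▸ hinv' (k : ℕ) x0 hx0)
  -- main induction: grow a fiber
  have hmain : ∀ k : ℕ, k ≤ n - 1 → ∃ (l : List Q) (X : Finset Q) (z : Q),
      l.length = k ∧ X.card = k + 1 ∧ ∀ p ∈ X, dfaRun δ p (l.map w).flatten = z := by
    intro k
    induction k with
    | zero =>
      intro _
      obtain ⟨z⟩ := ‹Nonempty Q›
      exact ⟨[], {z}, z, rfl, by simp, by intro p hp; simp at hp; simp [hp, dfaRun]⟩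
    | succ m ih =>
      intro hm
      obtain ⟨l, X, z, hl, hX, hprop⟩ := ih (by omega)
      have hXne : X.Nonempty := Finset.card_pos.mp (by omega)
      have hXnu : X ≠ Finset.univ := by
        intro h
        rw [h, Finset.card_univ] at hX
        omega
      obtain ⟨q, hqX, hsqX⟩ := hkey X hXne hXnu
      set g : Q → Q := fun p => dfaRun δ p (w q) with hg
      set X' := Finset.univ.filter (fun p => g p ∈ X) with hX'
      have hsqne : σ q ≠ q := by intro h; exact hqX (h ▸ hsqX)
      have hfib1 := fiber_one g q (σ q) hsqne (hdef q) (hcontr q)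
      -- card of X'
      have hcard : X'.card = X.card + 1 := by
        have h1 : X'.card = ∑ b ∈ X, (X'.filter (fun a => g a = b)).card :=
          Finset.card_eq_sum_card_fiberwise (by
            intro x hx
            simp only [Finset.mem_coe, hX', Finset.mem_filter] at hx
            exact hx.2)
        have h2 : ∀ b ∈ X, (X'.filter (fun a => g a = b)) = Finset.univ.filter (fun a => g a = b) := by
          intro b hb
          ext a
          simp only [hX', Finset.mem_filter, Finset.mem_univ, true_and]
          constructor
          · rintro ⟨_, h⟩; exact h
          · intro h; exact ⟨h ▸ hb, h⟩
        rw [Finset.sum_congr rfl (fun b hb => by rw [h2 b hb])] at h1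
        have h3 : X = insert (σ q) (X.erase (σ q)) := (Finset.insert_erase hsqX).symm
        rw [h3, Finset.sum_insert (Finset.notMem_erase _ _)] at h1
        have h4 : ∀ b ∈ X.erase (σ q), (Finset.univ.filter (fun a => g a = b)).card = 1 := by
          intro b hb
          rw [Finset.mem_erase] at hb
          apply hfib1 b _ hb.1
          intro h; exact hqX (h ▸ hb.2)
        rw [Finset.sum_congr rfl h4] at h1
        simp only [Finset.sum_const, smul_eq_mul, mul_one] at h1
        rw [hcontr q] at h1
        rw [h1, Finset.card_erase_of_mem hsqX]
        omega
      refine ⟨q :: l, X', z, by simp [hl], by omega, ?_⟩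
      intro p hp
      rw [hX', Finset.mem_filter] at hp
      have : dfaRun δ p ((q :: l).map w).flatten = dfaRun δ (g p) (l.map w).flatten := by
        simp only [List.map_cons, List.flatten_cons, dfaRun, List.foldl_append, hg]
      rw [this]
      exact hprop _ hp.2
  obtain ⟨l, X, z, hl, hX, hprop⟩ := hmain (n - 1) le_rfl
  have hXu : X = Finset.univ := by
    apply Finset.eq_univ_of_card
    rw [hX]; omega
  exact ⟨l, hl, z, fun p => hprop p (hXu ▸ Finset.mem_univ p)⟩
end

section
/- Let A be an n-state DFA admitting an efficient 1-contracting collection W (words of length ≤ n) whose induced state map is a cyclic permutation of Q. Then A has a synchronizing word of length at most (n−1)². -/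
open Finset

private lemma aux_split {Q A : Type*} (δ : Q → A → Q) :
    ∀ (l : List A), ¬ Function.Injective (fun x => dfaRun δ x l) →
    ∃ p c s, l = p ++ c :: s ∧ Function.Injective (fun x => dfaRun δ x s) ∧
      ¬ Function.Injective (fun x => dfaRun δ x (c :: s)) := by
  intro l
  induction l with
  | nil =>
    intro h
    exact absurd (fun a b hab => hab) h
  | cons a t ih =>
    intro h
    by_cases ht : Function.Injective (fun x => dfaRun δ x t)
    · exact ⟨[], a, t, rfl, ht, h⟩
    · obtain ⟨p, c, s, h1, h2, h3⟩ := ih ht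
      exact ⟨a :: p, c, s, by rw [h1]; rfl, h2, h3⟩

private lemma aux_escape {Q : Type*} [Fintype Q] [DecidableEq Q] {σ : Q → Q}
    (hcyc : IsCyclicMap σ) (R : Finset Q) (hne : R.Nonempty) (hnu : R ≠ Finset.univ) :
    ∃ x ∈ R, σ x ∉ R := by
  by_contra hcon
  push_neg at hcon
  obtain ⟨r, hr⟩ := hne
  have hn : 1 ≤ Fintype.card Q := Fintype.card_pos_iff.mpr ⟨r⟩
  have hσinj : Function.Injective σ := by
    intro a b hab
    have h1 : σ^[Fintype.card Q] a = σ^[Fintype.card Q] b := by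
      rw [show Fintype.card Q = (Fintype.card Q - 1) + 1 from by omega,
        Function.iterate_succ_apply, Function.iterate_succ_apply, hab]
    rwa [hcyc.1] at h1
  have hiter : ∀ k, σ^[k] r ∈ R := by
    intro k
    induction k with
    | zero => exact hr
    | succ k ihk => rw [Function.iterate_succ_apply']; exact hcon _ ihk
  have hdist : ∀ i j : ℕ, i < j → j < Fintype.card Q → σ^[i] r ≠ σ^[j] r := by
    intro i j hij hjn heq
    have h1 : σ^[i] (σ^[j - i] r) = σ^[i] r := by
      rw [← Function.iterate_add_apply, show i + (j - i) = j from by omega]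
      exact heq.symm
    exact hcyc.2 r (j - i) (by omega) (by omega) ((hσinj.iterate i) h1)
  have hginj : Function.Injective (fun k : Fin (Fintype.card Q) => σ^[(k : ℕ)] r) := by
    intro i j hij
    by_contra hne2
    rcases Ne.lt_or_gt hne2 with h | h
    · exact hdist i j h j.2 hij
    · exact hdist j i h i.2 hij.symm
  have hgsurj : Function.Surjective (fun k : Fin (Fintype.card Q) => σ^[(k : ℕ)] r) :=
    ((Fintype.bijective_iff_injective_and_card _).mpr ⟨hginj, by simp⟩).surjective
  apply hnu
  apply Finset.eq_univ_iff_forall.mpr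
  intro y
  obtain ⟨k, hk⟩ := hgsurj y
  rw [← hk]
  exact hiter k

private lemma aux_fiber {Q : Type*} [Fintype Q] [DecidableEq Q] (f : Q → Q) (q t : Q)
    (himg : Finset.univ.image f = Finset.univ \ {q})
    (h2 : (Finset.univ.filter fun x => f x = t).card = 2) :
    ∀ y, y ≠ q → y ≠ t → (Finset.univ.filter fun x => f x = y).card = 1 := by
  intro y hyq hyt
  have hnotq : ∀ x : Q, f x ≠ q := by
    intro x hx
    have : f x ∈ Finset.univ \ {q} := himg ▸ mem_image_of_mem f (mem_univ x)
    rw [hx] at this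
    simp at this
  have htq : t ≠ q := by
    have hne : (Finset.univ.filter fun x => f x = t).Nonempty := card_pos.mp (by omega)
    obtain ⟨x, hx⟩ := hne
    have hfx : f x = t := (mem_filter.mp hx).2
    exact hfx ▸ hnotq x
  have htotal : Fintype.card Q = ∑ z ∈ Finset.univ, (Finset.univ.filter fun x => f x = z).card := by
    rw [← card_univ]
    exact card_eq_sum_card_fiberwise (fun x _ => mem_univ (f x))
  have hqt_sub : ({q, t} : Finset Q) ⊆ Finset.univ := subset_univ _
  have hsplit : (∑ z ∈ Finset.univ \ {q, t}, (Finset.univ.filter fun x => f x = z).card)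
      + ∑ z ∈ ({q, t} : Finset Q), (Finset.univ.filter fun x => f x = z).card
      = ∑ z ∈ Finset.univ, (Finset.univ.filter fun x => f x = z).card :=
    sum_sdiff hqt_sub
  have hpair : ∑ z ∈ ({q, t} : Finset Q), (Finset.univ.filter fun x => f x = z).card = 2 := by
    rw [sum_pair (Ne.symm htq)]
    have hq0 : (Finset.univ.filter fun x => f x = q) = ∅ := by
      apply filter_eq_empty_iff.mpr
      intro x _
      exact hnotq x
    rw [hq0, h2]
    simp
  have hcard_diff : (Finset.univ \ ({q, t} : Finset Q)).card = Fintype.card Q - 2 := by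
    rw [card_sdiff_of_subset hqt_sub, card_univ, card_pair (Ne.symm htq)]
  have hge : ∀ z ∈ Finset.univ \ ({q, t} : Finset Q),
      1 ≤ (Finset.univ.filter fun x => f x = z).card := by
    intro z hz
    have hzq : z ≠ q := by
      intro h; rw [h] at hz; simp at hz
    have : z ∈ Finset.univ.image f := by
      rw [himg]; simp [hzq]
    obtain ⟨x, -, hx⟩ := mem_image.mp this
    exact card_pos.mpr ⟨x, mem_filter.mpr ⟨mem_univ x, hx⟩⟩
  have hsum_diff : ∑ z ∈ Finset.univ \ ({q, t} : Finset Q),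
      (Finset.univ.filter fun x => f x = z).card = Fintype.card Q - 2 := by omega
  by_contra hne1
  have hy_mem : y ∈ Finset.univ \ ({q, t} : Finset Q) := by simp [hyq, hyt]
  have hy2 : 2 ≤ (Finset.univ.filter fun x => f x = y).card := by
    have := hge y hy_mem
    omega
  have hlt : ∑ z ∈ Finset.univ \ ({q, t} : Finset Q), 1
      < ∑ z ∈ Finset.univ \ ({q, t} : Finset Q), (Finset.univ.filter fun x => f x = z).card :=
    sum_lt_sum hge ⟨y, hy_mem, by omega⟩
  rw [sum_const, smul_eq_mul, mul_one, hcard_diff, hsum_diff] at hlt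
  omega

private lemma aux_precard {Q : Type*} [Fintype Q] [DecidableEq Q] (f : Q → Q) (q t : Q)
    (himg : Finset.univ.image f = Finset.univ \ {q})
    (h2 : (Finset.univ.filter fun x => f x = t).card = 2)
    (R : Finset Q) (hq : q ∈ R) (ht : t ∉ R) :
    (Finset.univ.filter fun x => f x ∈ R.erase q).card = R.card - 1 := by
  have h1 : (Finset.univ.filter fun x => f x ∈ R.erase q).card
      = ∑ y ∈ R.erase q, ((Finset.univ.filter fun x => f x ∈ R.erase q).filter
          fun x => f x = y).card := by
    apply card_eq_sum_card_fiberwise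
    intro x hx
    simp only [mem_filter, Finset.mem_coe] at hx
    exact hx.2
  have heq : ∀ y ∈ R.erase q, ((Finset.univ.filter fun x => f x ∈ R.erase q).filter
      fun x => f x = y) = Finset.univ.filter fun x => f x = y := by
    intro y hy
    ext x
    simp only [mem_filter, mem_univ, true_and]
    constructor
    · rintro ⟨-, h⟩
      exact h
    · intro h
      refine ⟨?_, h⟩
      rw [h]
      exact hy
  have hone : ∀ y ∈ R.erase q, (Finset.univ.filter fun x => f x = y).card = 1 := by
    intro y hy
    refine aux_fiber f q t himg h2 y (ne_of_mem_erase hy) ?_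
    intro h
    exact ht (h ▸ mem_of_mem_erase hy)
  rw [h1, sum_congr rfl (fun y hy => (heq y hy) ▸ hone y hy)]
  simp [card_erase_of_mem hq]

private lemma aux_preimg {Q : Type*} [Fintype Q] [DecidableEq Q] (f : Q → Q) (q : Q)
    (himg : Finset.univ.image f = Finset.univ \ {q})
    (R : Finset Q) (hq : q ∈ R) :
    (Finset.univ \ Finset.univ.filter fun x => f x ∈ R.erase q).image f
      = Finset.univ \ R := by
  have hnotq : ∀ x : Q, f x ≠ q := by
    intro x hx
    have : f x ∈ Finset.univ \ {q} := himg ▸ mem_image_of_mem f (mem_univ x)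
    rw [hx] at this
    simp at this
  ext y
  simp only [mem_image, mem_sdiff, mem_univ, true_and, mem_filter]
  constructor
  · rintro ⟨x, hx, rfl⟩
    intro hyR
    exact hx (mem_erase.mpr ⟨hnotq x, hyR⟩)
  · intro hyR
    have hyq : y ≠ q := fun h => hyR (h ▸ hq)
    have : y ∈ Finset.univ.image f := by rw [himg]; simp [hyq]
    obtain ⟨x, -, hfx⟩ := mem_image.mp this
    refine ⟨x, ?_, hfx⟩
    intro hx
    exact hyR (hfx ▸ mem_of_mem_erase hx)

/-- With an efficient `1`-contracting collection whose state map is a cyclic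
    permutation, there is a synchronizing word of length at most `(n−1)²`. -/
theorem stmt12 {Q A : Type*} [Fintype Q] [DecidableEq Q]
    (hn : 2 ≤ Fintype.card Q)
    (δ : Q → A → Q) (w : Q → List A) (σ : Q → Q)
    (hdef : ∀ q : Q, Finset.univ.image (fun p => dfaRun δ p (w q)) = Finset.univ \ {q})
    (heff : ∀ q : Q, (w q).length ≤ Fintype.card Q)
    (hcontr : ∀ q : Q, (Finset.univ.filter (fun p => dfaRun δ p (w q) = σ q)).card = 2)
    (hcyc : IsCyclicMap σ) :
    ∃ ws : List A, ws.length ≤ (Fintype.card Q - 1) ^ 2 ∧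
      ∃ q : Q, ∀ p : Q, dfaRun δ p ws = q := by
  classical
  set n := Fintype.card Q with hn_def
  haveI hQne : Nonempty Q := Fintype.card_pos_iff.mp (by omega)
  have hrun_app : ∀ (x : Q) (u v : List A),
      dfaRun δ x (u ++ v) = dfaRun δ (dfaRun δ x u) v := by
    intro x u v
    simp [dfaRun, List.foldl_append]
  have hcard_sdiff_one : ∀ q : Q, (Finset.univ \ ({q} : Finset Q)).card = n - 1 := by
    intro q
    rw [card_sdiff_of_subset (subset_univ _), card_univ, card_singleton]
  have hni : ∀ q, ¬ Function.Injective (fun x => dfaRun δ x (w q)) := by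
    intro q hinj
    have h1 : (Finset.univ.image fun p => dfaRun δ p (w q)).card = n := by
      rw [Finset.card_image_of_injective _ hinj, card_univ]
    rw [hdef q, hcard_sdiff_one q] at h1
    omega
  choose pp cc ss hsp hinjs hninj using fun q => aux_split δ (w q) (hni q)
  set M := Finset.univ.sup (fun q : Q => (ss q).length) with hM_def
  have hccni : ∀ q, ¬ Function.Injective (fun x => δ x (cc q)) := by
    intro q hc
    apply hninj q
    intro a b hab
    have hab' : dfaRun δ (δ a (cc q)) (ss q) = dfaRun δ (δ b (cc q)) (ss q) := hab
    exact hc (hinjs q hab')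
  have hhead : ∀ q, Finset.univ.image (fun x => dfaRun δ x (cc q :: ss q))
      = Finset.univ \ {q} := by
    intro q
    have hsub : Finset.univ \ {q} ⊆ Finset.univ.image (fun x => dfaRun δ x (cc q :: ss q)) := by
      intro y hy
      rw [← hdef q] at hy
      obtain ⟨z, -, hz⟩ := mem_image.mp hy
      refine mem_image.mpr ⟨dfaRun δ z (pp q), mem_univ _, ?_⟩
      rw [← hrun_app, ← hsp q]
      exact hz
    have hcard2 : (Finset.univ.image fun x => dfaRun δ x (cc q :: ss q)).card ≤ n - 1 := by
      have himgeq : (Finset.univ.image fun x => dfaRun δ x (cc q :: ss q)) =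
          (Finset.univ.image fun x => δ x (cc q)).image (fun x => dfaRun δ x (ss q)) := by
        rw [Finset.image_image]
        rfl
      rw [himgeq]
      have h1 : (Finset.univ.image fun x => δ x (cc q)).card < n := by
        by_contra hle
        push_neg at hle
        have heq : (Finset.univ.image fun x => δ x (cc q)) = Finset.univ := by
          apply Finset.eq_univ_of_card
          exact le_antisymm (by rw [← card_univ]; exact card_image_le) hle
        have hsurj : Function.Surjective (fun x => δ x (cc q)) := by
          intro y
          have : y ∈ Finset.univ.image fun x => δ x (cc q) := by
            rw [heq]
            exact mem_univ y
          obtain ⟨x, -, hx⟩ := mem_image.mp this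
          exact ⟨x, hx⟩
        exact hccni q (Finite.injective_iff_surjective.mpr hsurj)
      calc ((Finset.univ.image fun x => δ x (cc q)).image fun x => dfaRun δ x (ss q)).card
          ≤ (Finset.univ.image fun x => δ x (cc q)).card := card_image_le
        _ ≤ n - 1 := by omega
    have h3 := hcard_sdiff_one q
    exact (eq_of_subset_of_card_le hsub (h3 ▸ hcard2)).symm
  -- main induction
  have main : ∀ k (R : Finset Q), R.card = k → R.Nonempty → R ≠ Finset.univ →
      ∃ u : List A, u.length ≤ (M + 1) + n * (k - 1) ∧
        Finset.univ.image (fun x => dfaRun δ x u) = Finset.univ \ R := by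
    intro k
    induction k using Nat.strong_induction_on with
    | _ k ih =>
      intro R hcard hne hnu
      have hklt : k < n := by
        have h := Finset.card_lt_card (Finset.ssubset_univ_iff.mpr hnu)
        rw [hcard, card_univ] at h
        exact h
      rcases Nat.lt_or_ge k 2 with hk | hk
      · have hk1 : k = 1 := by
          have := card_pos.mpr hne
          omega
        subst hk1
        obtain ⟨x, rfl⟩ := card_eq_one.mp hcard
        refine ⟨cc x :: ss x, ?_, hhead x⟩
        have hMx : (ss x).length ≤ M := by
          rw [hM_def]
          exact Finset.le_sup (f := fun q : Q => (ss q).length) (mem_univ x)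
        simp only [List.length_cons]
        omega
      · obtain ⟨q', hq'R, hσq'⟩ := aux_escape hcyc R hne hnu
        set R' := Finset.univ.filter (fun x => dfaRun δ x (w q') ∈ R.erase q') with hR'
        have hcardR' : R'.card = k - 1 := by
          have h := aux_precard (fun x => dfaRun δ x (w q')) q' (σ q')
            (hdef q') (hcontr q') R hq'R hσq'
          rw [hcard] at h
          exact h
        have hneR' : R'.Nonempty := card_pos.mp (by omega)
        have hnuR' : R' ≠ Finset.univ := by
          intro h
          apply_fun Finset.card at h
          rw [hcardR', card_univ] at h
          omega
        obtain ⟨u, hlen, himgu⟩ := ih (k - 1) (by omega) R' hcardR' hneR' hnuR'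
        refine ⟨u ++ w q', ?_, ?_⟩
        · have h4 : n * (k - 1 - 1) + n = n * (k - 1) := by
            have h5 : (k - 1 - 1) + 1 = k - 1 := by omega
            calc n * (k - 1 - 1) + n = n * ((k - 1 - 1) + 1) := (Nat.mul_succ n (k - 1 - 1)).symm
              _ = n * (k - 1) := by rw [h5]
          calc (u ++ w q').length = u.length + (w q').length := List.length_append
            _ ≤ ((M + 1) + n * (k - 1 - 1)) + n := add_le_add hlen (heff q')
            _ = (M + 1) + (n * (k - 1 - 1) + n) := by rw [add_assoc]
            _ = (M + 1) + n * (k - 1) := by rw [h4]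
        · have himgapp : Finset.univ.image (fun x => dfaRun δ x (u ++ w q'))
              = (Finset.univ.image fun x => dfaRun δ x u).image
                  (fun x => dfaRun δ x (w q')) := by
            rw [Finset.image_image]
            apply image_congr
            intro x _
            exact hrun_app x u (w q')
          rw [himgapp, himgu]
          exact aux_preimg (fun x => dfaRun δ x (w q')) q' (hdef q') R hq'R
  -- case split on n = 2 / n ≥ 3
  rcases Nat.lt_or_ge n 3 with hn2 | hn3
  · -- n = 2 : a single non-injective letter synchronizes
    obtain ⟨q0⟩ := hQne
    have hcc := hccni q0
    rw [Function.not_injective_iff] at hcc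
    obtain ⟨a, b, hab, hne_ab⟩ := hcc
    refine ⟨[cc q0], ?_, δ a (cc q0), ?_⟩
    · have : 1 ≤ (n - 1) ^ 2 := by
        have : n = 2 := by omega
        rw [this]
        norm_num
      simpa using this
    · intro p
      have hall : ∀ x : Q, x = a ∨ x = b := by
        intro x
        by_contra hx
        push_neg at hx
        have h3 : ({a, b, x} : Finset Q).card = 3 := by
          rw [card_insert_of_notMem (by simp [hne_ab, Ne.symm hx.1]),
            card_insert_of_notMem (by simp [Ne.symm hx.2]), card_singleton]
        have h4 := card_le_univ ({a, b, x} : Finset Q)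
        rw [h3] at h4
        omega
      have hrun1 : ∀ x : Q, dfaRun δ x [cc q0] = δ x (cc q0) := fun x => rfl
      rcases hall p with h | h
      · rw [hrun1 p, h]
      · rw [hrun1 p, h]
        exact hab.symm
  · -- n ≥ 3
    obtain ⟨qf, -, hqfM⟩ := Finset.exists_mem_eq_sup Finset.univ univ_nonempty
      (fun q : Q => (ss q).length)
    set P := Finset.univ.filter (fun x => dfaRun δ x (w qf) = σ qf) with hP
    have hPcard : P.card = 2 := hcontr qf
    have hRcard : (Finset.univ \ P).card = n - 2 := by
      rw [card_sdiff_of_subset (subset_univ _), card_univ, hPcard]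
    obtain ⟨u, hlen, himgu⟩ := main (n - 2) (Finset.univ \ P) hRcard
      (card_pos.mp (by omega))
      (by
        intro h
        apply_fun Finset.card at h
        rw [hRcard, card_univ] at h
        omega)
    have himgP : Finset.univ.image (fun x => dfaRun δ x u) = P := by
      rw [himgu, sdiff_sdiff_right_self, inf_eq_inter, univ_inter]
    have htail : ∀ x ∈ P, ∀ y ∈ P,
        dfaRun δ x (pp qf ++ [cc qf]) = dfaRun δ y (pp qf ++ [cc qf]) := by
      intro x hx y hy
      have hx' : dfaRun δ x (w qf) = σ qf := (mem_filter.mp hx).2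
      have hy' : dfaRun δ y (w qf) = σ qf := (mem_filter.mp hy).2
      have hw : w qf = (pp qf ++ [cc qf]) ++ ss qf := by
        rw [hsp qf]
        simp
      rw [hw, hrun_app] at hx' hy'
      exact hinjs qf (hx'.trans hy'.symm)
    obtain ⟨x0, hx0⟩ : P.Nonempty := card_pos.mp (by omega)
    refine ⟨u ++ (pp qf ++ [cc qf]), ?_, dfaRun δ x0 (pp qf ++ [cc qf]), ?_⟩
    · -- length computation
      have hwlen : (w qf).length = (pp qf).length + 1 + (ss qf).length := by
        rw [hsp qf]
        simp [List.length_append]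
        omega
      have hMf : M = (ss qf).length := by
        rw [hM_def]
        exact hqfM
      have he3 : (pp qf).length + 1 + M ≤ n := by
        rw [hMf, ← hwlen]
        exact heff qf
      obtain ⟨m, hm⟩ : ∃ m, n = m + 3 := ⟨n - 3, by omega⟩
      have e0 : n - 2 - 1 = m := by omega
      have e1 : n * (n - 2 - 1) = m * m + 3 * m := by
        rw [e0, hm]
        ring
      have e2 : (n - 1) ^ 2 = m * m + 4 * m + 4 := by
        rw [hm, show m + 3 - 1 = m + 2 from by omega]
        ring
      have hlen2 : (u ++ (pp qf ++ [cc qf])).length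
          = u.length + ((pp qf).length + 1) := by
        simp [List.length_append]
      rw [hlen2, e2]
      have hlen3 : u.length ≤ (M + 1) + (m * m + 3 * m) := by
        rw [← e1]
        exact hlen
      omega
    · intro p
      rw [hrun_app]
      have hmem : dfaRun δ p u ∈ P := by
        rw [← himgP]
        exact mem_image_of_mem _ (mem_univ p)
      exact htail _ hmem x0 hx0
end

section
/- Let A be an n-state DFA with a letter b acting as a cyclic permutation of Q (circular automaton) and a letter a with |δ(Q,a)| = n − 1. Let q_a be the state excluded by a, q_a^c the contracting state of a, and d the distance on the b-circle from q_a to q_a^c (i.e., δ(q_a, b^d) = q_a^c). If gcd(d, n) = 1, then A is synchronizing. -/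
/-- A circular automaton (letter `b` a cyclic permutation) with a `1`-deficient
    letter `a` whose excluded state `qa` and contracting state `qac` are at distance
    `d` on the `b`-circle with `gcd(d,n) = 1` is synchronizing. -/
theorem stmt13 {Q A : Type*} [Fintype Q] [DecidableEq Q]
    (δ : Q → A → Q) (a b : A) (qa qac : Q) (d : ℕ)
    (hb : IsCyclicMap (fun q => δ q b))
    (ha : Finset.univ.image (fun q => δ q a) = Finset.univ \ {qa})
    (hqac : (Finset.univ.filter (fun p => δ p a = qac)).card = 2)
    (hd : (fun q => δ q b)^[d] qa = qac)
    (hgcd : Nat.gcd d (Fintype.card Q) = 1) :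
    ∃ w : List A, ∃ q : Q, ∀ p : Q, dfaRun δ p w = q := by
  classical
  set n := Fintype.card Q with hn
  set σ : Q → Q := fun q => δ q b with hσ
  set f : Q → Q := fun q => δ q a with hfdef
  obtain ⟨hσn, hσk⟩ := hb
  have hn0 : 0 < n := Fintype.card_pos_iff.mpr ⟨qa⟩
  have hnz : NeZero n := ⟨hn0.ne'⟩
  -- σ is bijective
  have hm1 : n - 1 + 1 = n := Nat.succ_pred_eq_of_pos hn0
  have hcomp1 : σ ∘ σ^[n-1] = id := by
    rw [← Function.iterate_succ' σ (n-1), Nat.succ_eq_add_one, hm1]; exact hσn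
  have hcomp2 : σ^[n-1] ∘ σ = id := by
    rw [← Function.iterate_succ σ (n-1), Nat.succ_eq_add_one, hm1]; exact hσn
  have hσbij : Function.Bijective σ :=
    Function.bijective_iff_has_inverse.mpr
      ⟨σ^[n-1], fun x => congrFun hcomp2 x, fun x => congrFun hcomp1 x⟩
  -- periodicity
  have hper : ∀ m : ℕ, σ^[m] = σ^[m % n] := by
    intro m
    conv_lhs => rw [← Nat.div_add_mod m n]
    rw [Function.iterate_add, Function.iterate_mul, hσn, Function.iterate_id]
    simp
  -- transitivity
  have htrans : ∀ p q : Q, ∃ j : ℕ, σ^[j] p = q := by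
    intro p q
    have hinj : Function.Injective (fun j : Fin n => σ^[j.1] p) := by
      intro i j hij
      simp only at hij
      by_contra hne
      have key : ∀ i j : Fin n, i.1 < j.1 → σ^[i.1] p = σ^[j.1] p → False := by
        intro i j hlt h
        have h2 : σ^[n - j.1 + i.1] p = p := by
          rw [Function.iterate_add_apply, h, ← Function.iterate_add_apply]
          have : n - j.1 + j.1 = n := Nat.sub_add_cancel j.2.le
          rw [this]
          exact congrFun hσn p
        have hge : 1 ≤ n - j.1 + i.1 := by omega
        have hlt2 : n - j.1 + i.1 < n := by omega
        exact hσk p (n - j.1 + i.1) hge hlt2 h2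
      rcases lt_trichotomy i.1 j.1 with h | h | h
      · exact key i j h hij
      · exact hne (Fin.ext h)
      · exact key j i h hij.symm
    have hsurj : Function.Surjective (fun j : Fin n => σ^[j.1] p) := by
      have := (Fintype.bijective_iff_injective_and_card (fun j : Fin n => σ^[j.1] p)).mpr
        ⟨hinj, by simp [hn]⟩
      exact this.2
    obtain ⟨j, hj⟩ := hsurj q
    exact ⟨j.1, hj⟩
  -- key: if ∅ ≠ S ≠ univ, some y outside S jumps into S under σ^[d]
  have hkey : ∀ S : Finset Q, S.Nonempty → S ≠ Finset.univ → ∃ y, y ∉ S ∧ σ^[d] y ∈ S := by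
    intro S hne hnu
    by_contra hcon
    push_neg at hcon
    set g : Q → Q := σ^[d] with hg
    have ginj : Function.Injective g := hσbij.injective.iterate d
    have himg : (Finset.univ \ S).image g = Finset.univ \ S := by
      apply Finset.eq_of_subset_of_card_le
      · intro x hx
        obtain ⟨y, hy, rfl⟩ := Finset.mem_image.mp hx
        simp only [Finset.mem_sdiff, Finset.mem_univ, true_and] at hy ⊢
        exact hcon y hy
      · rw [Finset.card_image_of_injective _ ginj]
    have hfwd : ∀ x ∈ S, g x ∈ S := by
      intro x hx
      by_contra hgx
      have h1 : g x ∈ Finset.univ \ S := by simp [hgx]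
      rw [← himg] at h1
      obtain ⟨y, hy, hxy⟩ := Finset.mem_image.mp h1
      have := ginj hxy
      subst this
      simp only [Finset.mem_sdiff, Finset.mem_univ, true_and] at hy
      exact hy hx
    have hiter : ∀ k : ℕ, ∀ x ∈ S, g^[k] x ∈ S := by
      intro k
      induction k with
      | zero => intro x hx; simpa using hx
      | succ k ih =>
        intro x hx
        rw [Function.iterate_succ_apply]
        exact ih _ (hfwd x hx)
    obtain ⟨s, hs⟩ := hne
    obtain ⟨q, hq⟩ : ∃ q, q ∉ S := by
      by_contra hall
      push_neg at hall
      exact hnu (Finset.eq_univ_iff_forall.mpr hall)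
    obtain ⟨j, hj⟩ := htrans s q
    -- find k with d * k ≡ j [MOD n]
    have hu : IsUnit (d : ZMod n) := (ZMod.isUnit_iff_coprime d n).mpr hgcd
    set k : ℕ := ((d : ZMod n)⁻¹ * (j : ZMod n)).val with hk
    have hcast : ((d * k : ℕ) : ZMod n) = ((j : ℕ) : ZMod n) := by
      push_cast
      rw [hk]
      rw [ZMod.natCast_val, ZMod.cast_id]
      rw [← mul_assoc, ZMod.mul_inv_of_unit _ hu, one_mul]
    have hmod : d * k ≡ j [MOD n] := (ZMod.natCast_eq_natCast_iff _ _ _).mp hcast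
    have : g^[k] s = q := by
      rw [hg, ← Function.iterate_mul]
      rw [hper (d * k), hmod, ← hper j]
      exact hj
    exact hq (this ▸ hiter k s hs)
  -- fiber cardinalities
  set c : Q → ℕ := fun t => (Finset.univ.filter (fun p => f p = t)).card with hc
  have hsumfib : ∑ t : Q, c t = n := by
    have := Finset.card_eq_sum_card_fiberwise
      (f := f) (s := Finset.univ) (t := Finset.univ) (fun x _ => Finset.mem_univ (f x))
    rw [Finset.card_univ] at this
    exact this.symm
  have hcqa : c qa = 0 := by
    rw [hc]
    simp only [Finset.card_eq_zero]
    rw [Finset.eq_empty_iff_forall_notMem]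
    intro p hp
    simp only [Finset.mem_filter, Finset.mem_univ, true_and] at hp
    have : qa ∈ Finset.univ.image f := Finset.mem_image.mpr ⟨p, Finset.mem_univ p, hp⟩
    rw [ha] at this
    simp at this
  have hcqac : c qac = 2 := hqac
  have hge1 : ∀ t : Q, t ≠ qa → 1 ≤ c t := by
    intro t ht
    have : t ∈ Finset.univ.image f := by
      rw [ha]; simp [ht]
    obtain ⟨p, _, hp⟩ := Finset.mem_image.mp this
    rw [hc]
    exact Finset.card_pos.mpr ⟨p, Finset.mem_filter.mpr ⟨Finset.mem_univ p, hp⟩⟩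
  have hqane : qa ≠ qac := by
    intro h
    rw [h, hcqac] at hcqa
    omega
  have hfib1 : ∀ t : Q, t ≠ qa → t ≠ qac → c t = 1 := by
    intro t h1 h2
    set E : Finset Q := ((Finset.univ.erase qa).erase qac).erase t with hE
    have hmem1 : qac ∈ Finset.univ.erase qa := Finset.mem_erase.mpr ⟨hqane.symm, Finset.mem_univ _⟩
    have hmem2 : t ∈ (Finset.univ.erase qa).erase qac :=
      Finset.mem_erase.mpr ⟨h2, Finset.mem_erase.mpr ⟨h1, Finset.mem_univ _⟩⟩
    have hEcard : E.card = n - 1 - 1 - 1 := by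
      rw [hE, Finset.card_erase_of_mem hmem2, Finset.card_erase_of_mem hmem1,
        Finset.card_erase_of_mem (Finset.mem_univ qa), Finset.card_univ]
    have hsplit : ∑ u : Q, c u = c qa + (c qac + (c t + ∑ u ∈ E, c u)) := by
      rw [Finset.add_sum_erase _ c hmem2, Finset.add_sum_erase _ c hmem1,
        Finset.add_sum_erase _ c (Finset.mem_univ qa)]
    have hElb : E.card ≤ ∑ u ∈ E, c u := by
      rw [Finset.card_eq_sum_ones]
      apply Finset.sum_le_sum
      intro u hu
      apply hge1
      rw [hE] at hu
      have := Finset.mem_erase.mp (Finset.mem_erase.mp (Finset.mem_erase.mp hu).2).2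
      exact this.1
    have hct1 : 1 ≤ c t := hge1 t h1
    rw [hsumfib, hcqa, hcqac] at hsplit
    omega
  -- run along replicate
  have hrep : ∀ (j : ℕ) (q : Q), dfaRun δ q (List.replicate j b) = σ^[j] q := by
    intro j
    induction j with
    | zero => intro q; simp [dfaRun]
    | succ j ih =>
      intro q
      rw [List.replicate_succ]
      show dfaRun δ (δ q b) (List.replicate j b) = σ^[j+1] q
      rw [ih, Function.iterate_succ_apply]
  -- growth lemma
  have hgrow : ∀ S : Finset Q, S.Nonempty → S ≠ Finset.univ →
      ∃ u : List A, (Finset.univ.filter (fun p => dfaRun δ p u ∈ S)).card = S.card + 1 := by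
    intro S hne hnu
    obtain ⟨y, hyS, hyd⟩ := hkey S hne hnu
    obtain ⟨j, hj⟩ := htrans qa y
    refine ⟨a :: List.replicate j b, ?_⟩
    have hrun : ∀ p, dfaRun δ p (a :: List.replicate j b) = σ^[j] (f p) := by
      intro p
      show dfaRun δ (δ p a) (List.replicate j b) = σ^[j] (f p)
      exact hrep j (δ p a)
    set T : Finset Q := Finset.univ.filter (fun t => σ^[j] t ∈ S) with hT
    have hTcard : T.card = S.card := by
      apply Finset.card_bij (fun t _ => σ^[j] t)
      · intro t ht; exact (Finset.mem_filter.mp ht).2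
      · intro t1 h1 t2 h2 h; exact (hσbij.injective.iterate j) h
      · intro s hs
        obtain ⟨t, ht⟩ := (hσbij.surjective.iterate j) s
        exact ⟨t, Finset.mem_filter.mpr ⟨Finset.mem_univ t, ht ▸ hs⟩, ht⟩
    have hqacT : qac ∈ T := by
      rw [hT, Finset.mem_filter]
      refine ⟨Finset.mem_univ _, ?_⟩
      have heq : σ^[j] qac = σ^[d] y := by
        rw [← hd, ← hj]
        rw [← Function.iterate_add_apply, ← Function.iterate_add_apply, Nat.add_comm]
      rw [heq]
      exact hyd
    have hqaT : qa ∉ T := by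
      rw [hT, Finset.mem_filter]
      rw [hj]
      simp [hyS]
    have hTpos : 1 ≤ T.card := Finset.card_pos.mpr ⟨qac, hqacT⟩
    have hfilter : Finset.univ.filter (fun p => dfaRun δ p (a :: List.replicate j b) ∈ S)
        = Finset.univ.filter (fun p => f p ∈ T) := by
      ext p
      simp only [Finset.mem_filter, Finset.mem_univ, true_and, hrun, hT]
    rw [hfilter]
    have hsum : (Finset.univ.filter (fun p => f p ∈ T)).card = ∑ t ∈ T, c t := by
      rw [Finset.card_eq_sum_card_fiberwise
        (f := f) (s := Finset.univ.filter (fun p => f p ∈ T)) (t := T)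
        (fun x hx => (Finset.mem_filter.mp hx).2)]
      apply Finset.sum_congr rfl
      intro t ht
      congr 1
      ext p
      simp only [Finset.mem_filter, Finset.mem_univ, true_and]
      constructor
      · rintro ⟨_, h⟩; exact h
      · intro h; exact ⟨h ▸ ht, h⟩
    rw [hsum]
    rw [← Finset.add_sum_erase _ c hqacT, hcqac]
    have hones : ∀ t ∈ T.erase qac, c t = 1 := by
      intro t ht
      obtain ⟨htne, htT⟩ := Finset.mem_erase.mp ht
      exact hfib1 t (fun h => hqaT (h ▸ htT)) htne
    rw [Finset.sum_congr rfl hones, Finset.sum_const, smul_eq_mul, mul_one,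
      Finset.card_erase_of_mem hqacT]
    omega
  -- main induction
  have hmain : ∀ k : ℕ, ∀ S : Finset Q, S.Nonempty → n - S.card ≤ k →
      ∃ w : List A, ∀ p : Q, dfaRun δ p w ∈ S := by
    intro k
    induction k with
    | zero =>
      intro S hne hle
      have hcle : S.card ≤ n := by rw [hn]; exact Finset.card_le_univ S
      have : S = Finset.univ := Finset.eq_univ_of_card S (by omega)
      exact ⟨[], fun p => by rw [this]; exact Finset.mem_univ _⟩
    | succ k ih =>
      intro S hne hle
      by_cases hu : S = Finset.univ
      · exact ⟨[], fun p => by rw [hu]; exact Finset.mem_univ _⟩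
      · obtain ⟨u, hucard⟩ := hgrow S hne hu
        set T := Finset.univ.filter (fun p => dfaRun δ p u ∈ S) with hT
        have hTne : T.Nonempty := Finset.card_pos.mp (by omega)
        have hScard : S.card ≠ n := fun h => hu (Finset.eq_univ_of_card S h)
        have hcle : S.card ≤ n := by rw [hn]; exact Finset.card_le_univ S
        have hr : n - T.card ≤ k := by omega
        obtain ⟨w, hw⟩ := ih T hTne hr
        refine ⟨w ++ u, fun p => ?_⟩
        have := hw p
        rw [hT, Finset.mem_filter] at this
        show List.foldl δ p (w ++ u) ∈ S
        rw [List.foldl_append]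
        exact this.2
  obtain ⟨w, hw⟩ := hmain n {qa} ⟨qa, Finset.mem_singleton_self qa⟩ (by omega)
  exact ⟨w, qa, fun p => Finset.mem_singleton.mp (hw p)⟩
end

section
/- Let A be an n-state circular DFA (letter b a cyclic permutation) with a 1-deficient letter a, excluded state q_a, contracting state q_a^c, and let d satisfy δ(q_a, b^d) = q_a^c. If gcd(d,n) = 1, then the words wᵢ = a b^{i−1} for 1 ≤ i ≤ n form an efficient 1-contracting collection: δ(Q, wᵢ) = Q \ {δ(q_a, b^{i−1})}, each wᵢ has length i ≤ n, and the induced state map q ↦ δ(q, b^d) is a cyclic permutation of Q. -/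
private lemma foldl_replicate {Q A : Type*} (δ : Q → A → Q) (b : A) :
    ∀ (m : ℕ) (q : Q), List.foldl δ q (List.replicate m b) = (fun q => δ q b)^[m] q := by
  intro m
  induction m with
  | zero => intro q; rfl
  | succ k ih =>
      intro q
      rw [List.replicate_succ, List.foldl_cons, ih, Function.iterate_succ_apply]

/-- In a circular automaton with a `1`-deficient letter `a` (excluded state `qa`,
    contracting state `qac` at `b`-distance `d` from `qa`, `gcd(d,n) = 1`), the words
    `wᵢ = a bⁱ⁻¹` for `1 ≤ i ≤ n` form an efficient `1`-contracting collection: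
    `wᵢ` excludes `δ(qa,bⁱ⁻¹)`, has length `i ≤ n`, its contracting state is
    `δ(qa, bⁱ⁻¹⁺ᵈ)`, and the state map `q ↦ δ(q,bᵈ)` is a cyclic permutation. -/
theorem stmt14 {Q A : Type*} [Fintype Q] [DecidableEq Q]
    (δ : Q → A → Q) (a b : A) (qa qac : Q) (d : ℕ)
    (hb : IsCyclicMap (fun q => δ q b))
    (ha : Finset.univ.image (fun q => δ q a) = Finset.univ \ {qa})
    (hqac : (Finset.univ.filter (fun p => δ p a = qac)).card = 2)
    (hd : (fun q => δ q b)^[d] qa = qac)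
    (hgcd : Nat.gcd d (Fintype.card Q) = 1) :
    (∀ i : ℕ, 1 ≤ i → i ≤ Fintype.card Q →
      Finset.univ.image (fun p => dfaRun δ p (a :: List.replicate (i - 1) b)) =
          Finset.univ \ {(fun q => δ q b)^[i - 1] qa} ∧
        (a :: List.replicate (i - 1) b).length = i ∧
        (a :: List.replicate (i - 1) b).length ≤ Fintype.card Q ∧
        (Finset.univ.filter (fun p =>
            dfaRun δ p (a :: List.replicate (i - 1) b) =
              (fun q => δ q b)^[d] ((fun q => δ q b)^[i - 1] qa))).card = 2) ∧
      IsCyclicMap (fun q => (fun q' => δ q' b)^[d] q) := by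
  set β : Q → Q := fun q => δ q b with hβ
  set n : ℕ := Fintype.card Q with hn
  have hβn : β^[n] = id := hb.1
  -- β is injective
  have hinj : Function.Injective β := by
    rcases Nat.eq_zero_or_pos n with h0 | hpos
    · have : IsEmpty Q := Fintype.card_eq_zero_iff.mp h0
      intro x y _; exact Subsingleton.elim x y
    · have hsurj : Function.Surjective β := by
        intro y
        refine ⟨β^[n - 1] y, ?_⟩
        have : β (β^[n-1] y) = β^[n] y := by
          conv_rhs => rw [show n = (n - 1) + 1 by omega]
          rw [Function.iterate_succ_apply']
        rw [this, hβn]; rfl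
      exact Finite.injective_iff_surjective.mpr hsurj
  have hkinj : ∀ k : ℕ, Function.Injective (β^[k]) := fun k => hinj.iterate k
  -- mod reduction of iterates
  have hmod : ∀ (x : ℕ) (q : Q), β^[x] q = β^[x % n] q := by
    intro x q
    conv_lhs => rw [← Nat.mod_add_div x n]
    rw [Function.iterate_add_apply, Function.iterate_mul, hβn]
    simp
  constructor
  · intro i hi1 hin
    have hrun : ∀ p : Q, dfaRun δ p (a :: List.replicate (i - 1) b)
        = β^[i-1] (δ p a) := by
      intro p
      simp only [dfaRun, List.foldl_cons]
      exact foldl_replicate δ b (i-1) (δ p a)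
    refine ⟨?_, ?_, ?_, ?_⟩
    · have : Finset.univ.image (fun p => dfaRun δ p (a :: List.replicate (i - 1) b))
          = Finset.image (β^[i-1]) (Finset.univ.image (fun q => δ q a)) := by
        rw [Finset.image_image]
        exact Finset.image_congr (fun p _ => hrun p)
      rw [this, ha, Finset.image_sdiff _ _ (hkinj (i-1)), Finset.image_singleton]
      congr 1
      exact Finset.image_univ_of_surjective
        (Finite.injective_iff_surjective.mp (hkinj (i-1)))
    · simp; omega
    · simp; omega
    · have : (Finset.univ.filter (fun p =>
          dfaRun δ p (a :: List.replicate (i - 1) b) = β^[d] (β^[i-1] qa)))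
          = Finset.univ.filter (fun p => δ p a = qac) := by
        apply Finset.filter_congr
        intro p _
        rw [hrun p]
        have hcomm : β^[d] (β^[i-1] qa) = β^[i-1] (β^[d] qa) := by
          rw [← Function.iterate_add_apply, ← Function.iterate_add_apply,
            Nat.add_comm]
        rw [hcomm, hd]
        constructor
        · intro h; exact hkinj (i-1) h
        · intro h; rw [h]
      rw [this, hqac]
  · constructor
    · show (fun q => β^[d] q)^[n] = id
      have : (fun q => β^[d] q) = β^[d] := rfl
      rw [this, ← Function.iterate_mul, Nat.mul_comm, Function.iterate_mul, hβn]
      simp [Function.iterate_id]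
    · intro q k hk1 hkn
      show (fun q => β^[d] q)^[k] q ≠ q
      have heq : (fun q => β^[d] q)^[k] q = β^[d * k] q := by
        have : (fun q => β^[d] q) = β^[d] := rfl
        rw [this, ← Function.iterate_mul]
      rw [heq, hmod]
      have hm0 : d * k % n ≠ 0 := by
        intro h
        have hdvd : n ∣ d * k := Nat.dvd_of_mod_eq_zero h
        have hcop : Nat.Coprime n d := by
          rw [Nat.coprime_comm]; exact hgcd
        have : n ∣ k := hcop.dvd_of_dvd_mul_left hdvd
        have := Nat.le_of_dvd (Nat.lt_of_lt_of_le hk1 (le_of_eq rfl)) this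
        omega
      have hmlt : d * k % n < n := Nat.mod_lt _ ((by omega : 0 < n))
      exact hb.2 q (d * k % n) (Nat.one_le_iff_ne_zero.mpr hm0) hmlt
end

section
/- Let A be an n-state circular DFA with respect to letter b, with a 1-deficient letter a whose excluded state q_a and contracting state q_a^c satisfy δ(q_a, b^d) = q_a^c with gcd(d,n) = 1. Then A has a synchronizing word of length at most (n−1)², and every nonempty subset S of Q of size k is reachable from Q by a word of length at most n(n−k). -/
private lemma iter_mod {Q : Type*} (σ : Q → Q) (n : ℕ) (h : σ^[n] = id) (m : ℕ) :
    σ^[m] = σ^[m % n] := by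
  conv_lhs => rw [← Nat.mod_add_div m n]
  rw [Function.iterate_add, Function.iterate_mul, h, Function.iterate_id, Function.comp_id]

private lemma dfaRun_replicate {Q A : Type*} (δ : Q → A → Q) (b : A) :
    ∀ (j : ℕ) (p : Q), dfaRun δ p (List.replicate j b) = (fun q => δ q b)^[j] p
  | 0, _ => rfl
  | j+1, p => by
      rw [List.replicate_succ]
      show dfaRun δ (δ p b) (List.replicate j b) = _
      rw [dfaRun_replicate δ b j (δ p b), Function.iterate_succ_apply]

/-- A circular automaton with a `1`-deficient letter at circle-distance `d` from its
    contracting state, `gcd(d,n) = 1`, has a synchronizing word of length at most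
    `(n−1)²`, and every nonempty `k`-subset is reachable by a word of length
    at most `n(n−k)`. -/
theorem stmt15 {Q A : Type*} [Fintype Q] [DecidableEq Q]
    (hn : 2 ≤ Fintype.card Q)
    (δ : Q → A → Q) (a b : A) (qa qac : Q) (d : ℕ)
    (hb : IsCyclicMap (fun q => δ q b))
    (ha : Finset.univ.image (fun q => δ q a) = Finset.univ \ {qa})
    (hqac : (Finset.univ.filter (fun p => δ p a = qac)).card = 2)
    (hd : (fun q => δ q b)^[d] qa = qac)
    (hgcd : Nat.gcd d (Fintype.card Q) = 1) :
    (∃ ws : List A, ws.length ≤ (Fintype.card Q - 1) ^ 2 ∧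
        ∃ q : Q, ∀ p : Q, dfaRun δ p ws = q) ∧
      ∀ S : Finset Q, S.Nonempty →
        ∃ wS : List A, wS.length ≤ Fintype.card Q * (Fintype.card Q - S.card) ∧
          Finset.univ.image (fun p => dfaRun δ p wS) = S := by
  set n := Fintype.card Q with hn'
  set σ : Q → Q := fun q => δ q b with hσ
  have hσn : σ^[n] = id := hb.1
  have hnpos : 0 < n := by omega
  -- σ is bijective
  have hσsurj : Function.Surjective σ := by
    intro q
    refine ⟨σ^[n-1] q, ?_⟩
    have h1 : σ (σ^[n-1] q) = σ^[(n-1)+1] q := (Function.iterate_succ_apply' σ (n-1) q).symm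
    rw [h1, Nat.sub_add_cancel (by omega), hσn]; rfl
  have hσinj : Function.Injective σ := by
    have := Finite.injective_iff_surjective (f := σ)
    exact this.mpr hσsurj
  -- orbit of qa is injective on [0,n)
  have horb : ∀ i j, i < n → j < n → σ^[i] qa = σ^[j] qa → i = j := by
    have aux : ∀ i j, i ≤ j → j < n → σ^[i] qa = σ^[j] qa → i = j := by
      intro i j hij hj h
      have h1 : σ^[i] (σ^[j - i] qa) = σ^[i] qa := by
        rw [← Function.iterate_add_apply, show i + (j - i) = j from by omega]
        exact h.symm
      have h2 : σ^[j - i] qa = qa := (hσinj.iterate i) h1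
      by_contra hne
      exact hb.2 qa (j - i) (by omega) (by omega) h2
    intro i j hi hj h
    rcases le_total i j with h' | h'
    · exact aux i j h' hj h
    · exact (aux j i h' hi h.symm).symm
  -- orbit of qa is surjective
  have horbsurj : ∀ q : Q, ∃ m, m < n ∧ σ^[m] qa = q := by
    have hinj : Function.Injective (fun i : Fin n => σ^[i.1] qa) :=
      fun i j h => Fin.ext (horb _ _ i.2 j.2 h)
    have hbij : Function.Bijective (fun i : Fin n => σ^[i.1] qa) :=
      (Fintype.bijective_iff_injective_and_card _).mpr ⟨hinj, by simp [hn']⟩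
    intro q
    obtain ⟨i, hi⟩ := hbij.2 q
    exact ⟨i.1, i.2, hi⟩
  -- the d-step sequence covers all of Q
  have hcsurj : ∀ q : Q, ∃ i, σ^[i * d] qa = q := by
    intro q
    obtain ⟨m, hm, hmq⟩ := horbsurj q
    haveI : NeZero n := ⟨by omega⟩
    have hu : IsUnit (d : ZMod n) := (ZMod.isUnit_iff_coprime d n).mpr hgcd
    obtain ⟨u, hu⟩ := hu
    set z : ZMod n := (m : ZMod n) * ↑u⁻¹ with hz
    refine ⟨z.val, ?_⟩
    have hcast : ((z.val * d : ℕ) : ZMod n) = (m : ZMod n) := by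
      push_cast
      rw [ZMod.natCast_val, ZMod.cast_id, mul_assoc, ← hu, Units.inv_mul, mul_one]
    have hmod : (z.val * d) % n = m := by
      have h1 : z.val * d ≡ m [MOD n] := (ZMod.natCast_eq_natCast_iff _ _ _).mp hcast
      unfold Nat.ModEq at h1
      rw [Nat.mod_eq_of_lt hm] at h1
      exact h1
    rw [iter_mod σ n hσn, hmod, hmq]
  -- crossing lemma
  have hcross : ∀ S : Finset Q, S.Nonempty → S.card < n →
      ∃ j, j < n ∧ σ^[j] qa ∉ S ∧ σ^[j + d] qa ∈ S := by
    intro S hSne hSc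
    obtain ⟨s, hs⟩ := hSne
    obtain ⟨q0, hq0⟩ : ∃ q, q ∉ S := by
      by_contra h
      push_neg at h
      have : S = Finset.univ := Finset.eq_univ_of_forall h
      rw [this, Finset.card_univ] at hSc
      omega
    obtain ⟨i1, hi1⟩ := hcsurj s
    obtain ⟨i0, hi0⟩ := hcsurj q0
    have hper : ∀ i k : ℕ, σ^[(i + k * n) * d] qa = σ^[i * d] qa := by
      intro i k
      rw [iter_mod σ n hσn ((i + k * n) * d), iter_mod σ n hσn (i * d)]
      congr 1
      have h1 : (i + k * n) * d = i * d + (k * d) * n := by ring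
      rw [h1, Nat.add_mul_mod_self_right]
    set i1' := i1 + (i0 + 1) * n with hi1'def
    have hi1' : σ^[i1' * d] qa = s := by rw [hi1'def, hper]; exact hi1
    have hge : i0 ≤ i1' := by
      have h1 : i0 + 1 ≤ (i0 + 1) * n := Nat.le_mul_of_pos_right _ hnpos
      omega
    have chain : ∀ k i, σ^[i * d] qa ∉ S → σ^[(i + k) * d] qa ∈ S →
        ∃ m, σ^[m * d] qa ∉ S ∧ σ^[(m + 1) * d] qa ∈ S := by
      intro k
      induction k with
      | zero => intro i h0 h1; exact absurd h1 h0
      | succ k ih =>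
        intro i h0 h1
        by_cases hm : σ^[(i + k) * d] qa ∈ S
        · exact ih i h0 hm
        · exact ⟨i + k, hm, by rw [show i + k + 1 = i + (k + 1) from rfl]; exact h1⟩
    obtain ⟨m, hm0, hm1⟩ := chain (i1' - i0) i0 (by rw [hi0]; exact hq0)
      (by rw [show i0 + (i1' - i0) = i1' from by omega, hi1']; exact hs)
    refine ⟨(m * d) % n, Nat.mod_lt _ hnpos, ?_, ?_⟩
    · rw [← iter_mod σ n hσn]; exact hm0
    · have h2 : ((m * d) % n + d) % n = ((m + 1) * d) % n := by
        rw [Nat.mod_add_mod]; congr 1; ring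
      rw [iter_mod σ n hσn ((m * d) % n + d), h2, ← iter_mod σ n hσn]
      exact hm1
  -- fiber counting
  have hfib : ∀ y : Q, y ≠ qa → y ≠ qac →
      (Finset.univ.filter (fun p => δ p a = y)).card = 1 := by
    set F : Q → ℕ := fun y => (Finset.univ.filter (fun p => δ p a = y)).card with hF
    have hsum : ∑ y : Q, F y = n := by
      have h1 := Finset.card_eq_sum_card_fiberwise
        (f := fun p : Q => δ p a) (s := Finset.univ) (t := Finset.univ)
        (fun x _ => Finset.mem_univ _)
      rw [Finset.card_univ] at h1
      exact h1.symm
    have hqa0 : F qa = 0 := by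
      rw [hF]
      simp only [Finset.card_eq_zero, Finset.filter_eq_empty_iff]
      intro p _
      intro hp
      have h1 : δ p a ∈ Finset.univ.image (fun q => δ q a) :=
        Finset.mem_image_of_mem _ (Finset.mem_univ p)
      rw [ha, hp] at h1
      simp at h1
    have hpos : ∀ y : Q, y ≠ qa → 1 ≤ F y := by
      intro y hy
      have h1 : y ∈ Finset.univ.image (fun q => δ q a) := by
        rw [ha]; simp [hy]
      obtain ⟨p, _, hp⟩ := Finset.mem_image.mp h1
      exact Finset.card_pos.mpr ⟨p, by simp [hp]⟩
    have hqaqac : qac ≠ qa := by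
      have h2 : 0 < (Finset.univ.filter (fun p => δ p a = qac)).card := by rw [hqac]; omega
      obtain ⟨p, hp⟩ := Finset.card_pos.mp h2
      simp only [Finset.mem_filter] at hp
      have h1 : qac ∈ Finset.univ.image (fun q => δ q a) :=
        Finset.mem_image.mpr ⟨p, Finset.mem_univ p, hp.2⟩
      rw [ha] at h1
      simp at h1
      exact h1
    set s : Finset Q := (Finset.univ.erase qa).erase qac with hsdef
    have hsum1 : F qa + ∑ y ∈ Finset.univ.erase qa, F y = ∑ y : Q, F y :=
      Finset.add_sum_erase _ F (Finset.mem_univ qa)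
    have hqacmem : qac ∈ Finset.univ.erase qa := Finset.mem_erase.mpr ⟨hqaqac, Finset.mem_univ _⟩
    have hsum2 : F qac + ∑ y ∈ s, F y = ∑ y ∈ Finset.univ.erase qa, F y :=
      Finset.add_sum_erase _ F hqacmem
    have hFqac : F qac = 2 := hqac
    have hsums : ∑ y ∈ s, F y = n - 2 := by omega
    have hscard : s.card = n - 2 := by
      rw [hsdef, Finset.card_erase_of_mem hqacmem, Finset.card_erase_of_mem (Finset.mem_univ qa),
        Finset.card_univ]
      omega
    have hone : ∀ y ∈ s, F y = 1 := by
      by_contra h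
      push_neg at h
      obtain ⟨y0, hy0, hy0'⟩ := h
      have h1 : ∀ y ∈ s, 1 ≤ F y := by
        intro y hy
        rw [hsdef] at hy
        exact hpos y (Finset.mem_erase.mp (Finset.mem_erase.mp hy).2).1
      have hlt : ∑ _y ∈ s, (1 : ℕ) < ∑ y ∈ s, F y :=
        Finset.sum_lt_sum h1 ⟨y0, hy0, by have := h1 y0 hy0; omega⟩
      rw [Finset.sum_const, smul_eq_mul, mul_one] at hlt
      omega
    intro y hya hyac
    exact hone y (by rw [hsdef]; exact Finset.mem_erase.mpr ⟨hyac, Finset.mem_erase.mpr ⟨hya, Finset.mem_univ _⟩⟩)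
  -- the one-step expansion lemma
  have step : ∀ S : Finset Q, S.Nonempty → S.card < n →
      ∃ T : Finset Q, ∃ w : List A, T.card = S.card + 1 ∧ w.length ≤ n ∧
        T.image (fun p => dfaRun δ p w) = S := by
    intro S hSne hSc
    obtain ⟨j, hjn, hja, hjc⟩ := hcross S hSne hSc
    set ρ : Q → Q := σ^[j] with hρ
    set ρi : Q → Q := σ^[n - j] with hρi
    have hρρi : ∀ q, ρ (ρi q) = q := by
      intro q
      rw [hρ, hρi, ← Function.iterate_add_apply, show j + (n - j) = n from by omega, hσn]
      rfl
    have hρiρ : ∀ q, ρi (ρ q) = q := by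
      intro q
      rw [hρ, hρi, ← Function.iterate_add_apply, show (n - j) + j = n from by omega, hσn]
      rfl
    set S' : Finset Q := S.image ρi with hS'
    have hqacS' : qac ∈ S' := by
      have h1 : ρ qac ∈ S := by
        rw [hρ, ← hd, ← Function.iterate_add_apply]
        exact hjc
      exact Finset.mem_image.mpr ⟨ρ qac, h1, hρiρ qac⟩
    have hqaS' : qa ∉ S' := by
      intro h
      obtain ⟨x, hx, hxe⟩ := Finset.mem_image.mp h
      have h1 : ρ qa = x := by rw [← hxe, hρρi]
      rw [← h1] at hx
      exact hja hx
    have hS'card : S'.card = S.card := Finset.card_image_of_injective S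
      (Function.LeftInverse.injective (g := ρ) hρρi)
    set T : Finset Q := Finset.univ.filter (fun p => δ p a ∈ S') with hT
    have himg : T.image (fun p => δ p a) = S' := by
      apply Finset.Subset.antisymm
      · intro y hy
        obtain ⟨p, hp, rfl⟩ := Finset.mem_image.mp hy
        rw [hT] at hp
        simpa using hp
      · intro y hy
        have hyqa : y ≠ qa := fun h => hqaS' (h ▸ hy)
        have h1 : y ∈ Finset.univ.image (fun q => δ q a) := by rw [ha]; simp [hyqa]
        obtain ⟨p, _, hp⟩ := Finset.mem_image.mp h1
        exact Finset.mem_image.mpr ⟨p, by rw [hT]; simp [hp, hy], hp⟩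
    have hTcard : T.card = S.card + 1 := by
      have h1 : T.card = ∑ y ∈ S', (Finset.univ.filter (fun p => δ p a = y)).card := by
        rw [Finset.card_eq_sum_card_fiberwise (f := fun p => δ p a) (s := T) (t := S')
          (by intro p hp; rw [hT] at hp; simpa using hp)]
        apply Finset.sum_congr rfl
        intro y hy
        congr 1
        ext p
        simp only [hT, Finset.mem_filter, Finset.mem_univ, true_and]
        constructor
        · exact fun h => h.2
        · exact fun h => ⟨h ▸ hy, h⟩
      rw [h1, ← Finset.add_sum_erase _ _ hqacS', hqac]
      have h2 : ∑ y ∈ S'.erase qac, (Finset.univ.filter (fun p => δ p a = y)).card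
          = (S'.erase qac).card := by
        rw [Finset.sum_congr rfl (fun y hy => hfib y
            (fun h => hqaS' (h ▸ (Finset.mem_erase.mp hy).2))
            (Finset.mem_erase.mp hy).1)]
        simp
      rw [h2, Finset.card_erase_of_mem hqacS', hS'card]
      have h3 : 1 ≤ S.card := Finset.card_pos.mpr hSne
      omega
    refine ⟨T, a :: List.replicate j b, hTcard, ?_, ?_⟩
    · simp only [List.length_cons, List.length_replicate]
      omega
    · have hrun : ∀ p, dfaRun δ p (a :: List.replicate j b) = ρ (δ p a) := by
        intro p
        show dfaRun δ (δ p a) (List.replicate j b) = ρ (δ p a)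
        rw [dfaRun_replicate, hρ, hσ]
      calc T.image (fun p => dfaRun δ p (a :: List.replicate j b))
          = T.image (fun p => ρ (δ p a)) := Finset.image_congr (fun p _ => hrun p)
        _ = (T.image (fun p => δ p a)).image ρ := by
            rw [Finset.image_image]; rfl
        _ = S'.image ρ := by rw [himg]
        _ = S := by
            rw [hS', Finset.image_image, show (ρ ∘ ρi) = id from funext hρρi, Finset.image_id]
  -- composition of images
  have himgcomp : ∀ (T : Finset Q) (w u : List A),
      T.image (fun p => dfaRun δ p (w ++ u)) =
        (T.image (fun p => dfaRun δ p w)).image (fun p => dfaRun δ p u) := by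
    intro T w u
    rw [Finset.image_image]
    apply Finset.image_congr
    intro p _
    simp [dfaRun, List.foldl_append]
  -- reachability
  have hfull : ∀ S : Finset Q, S.card = n →
      ∃ w : List A, w.length ≤ n * (n - S.card) ∧
        Finset.univ.image (fun p => dfaRun δ p w) = S := by
    intro S hScard
    have hSuniv : S = Finset.univ := Finset.eq_univ_of_card S (by rw [hScard, hn'])
    refine ⟨[], by simp, ?_⟩
    rw [hSuniv]
    apply Finset.eq_univ_of_forall
    intro q
    exact Finset.mem_image.mpr ⟨q, Finset.mem_univ q, rfl⟩
  have reach : ∀ m : ℕ, ∀ S : Finset Q, S.Nonempty → n - S.card ≤ m →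
      ∃ w : List A, w.length ≤ n * (n - S.card) ∧
        Finset.univ.image (fun p => dfaRun δ p w) = S := by
    intro m
    induction m with
    | zero =>
      intro S hSne hle
      have h1 : S.card ≤ n := by rw [hn']; exact Finset.card_le_univ S
      exact hfull S (by omega)
    | succ m ih =>
      intro S hSne hle
      by_cases hcase : S.card < n
      · obtain ⟨T, v, hTc, hvl, hTv⟩ := step S hSne hcase
        have hTne : T.Nonempty := Finset.card_pos.mp (by omega)
        have hTcard_le : T.card ≤ n := by rw [hn']; exact Finset.card_le_univ T
        obtain ⟨w, hwl, hw⟩ := ih T hTne (by omega)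
        refine ⟨w ++ v, ?_, ?_⟩
        · rw [List.length_append]
          obtain ⟨t, ht⟩ : ∃ t, n - S.card = t + 1 := ⟨n - S.card - 1, by omega⟩
          have h1 : n - T.card = t := by omega
          have h2 : n * (t + 1) = n * t + n := by ring
          rw [ht, h2]
          rw [h1] at hwl
          omega
        · rw [himgcomp, hw, hTv]
      · have h1 : S.card ≤ n := by rw [hn']; exact Finset.card_le_univ S
        exact hfull S (by omega)
  -- synchronization chain
  have sync : ∀ m : ℕ, m ≤ n - 2 → ∃ T : Finset Q, ∃ u : List A,
      T.card = 2 + m ∧ u.length ≤ 1 + n * m ∧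
        T.image (fun p => dfaRun δ p u) = {qac} := by
    intro m
    induction m with
    | zero =>
      intro _
      refine ⟨Finset.univ.filter (fun p => δ p a = qac), [a], hqac, by simp, ?_⟩
      apply Finset.Subset.antisymm
      · intro y hy
        obtain ⟨p, hp, rfl⟩ := Finset.mem_image.mp hy
        simp only [Finset.mem_filter, Finset.mem_univ, true_and] at hp
        have : dfaRun δ p [a] = δ p a := rfl
        rw [this, hp]
        simp
      · intro y hy
        rw [Finset.mem_singleton] at hy
        have h2 : 0 < (Finset.univ.filter (fun p => δ p a = qac)).card := by rw [hqac]; omega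
        obtain ⟨p, hp⟩ := Finset.card_pos.mp h2
        have hp' := (Finset.mem_filter.mp hp).2
        exact Finset.mem_image.mpr ⟨p, hp, by show δ p a = y; rw [hp', hy]⟩
    | succ m ih =>
      intro hm
      obtain ⟨T, u, hTc, hul, hTu⟩ := ih (by omega)
      obtain ⟨T', v, hT'c, hvl, hT'v⟩ := step T (Finset.card_pos.mp (by omega)) (by omega)
      refine ⟨T', v ++ u, by omega, ?_, by rw [himgcomp, hT'v, hTu]⟩
      rw [List.length_append]
      have h1 : n * (m + 1) = n * m + n := by ring
      omega
  constructor
  · obtain ⟨T, u, hTc, hul, hTu⟩ := sync (n - 2) le_rfl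
    have hTuniv : T = Finset.univ := Finset.eq_univ_of_card T (by rw [hTc, hn']; omega)
    refine ⟨u, ?_, qac, ?_⟩
    · obtain ⟨k, hk⟩ : ∃ k, n = k + 2 := ⟨n - 2, by omega⟩
      have h1 : 1 + n * (n - 2) = (n - 1) ^ 2 := by
        rw [hk]
        have h2 : k + 2 - 2 = k := by omega
        have h3 : k + 2 - 1 = k + 1 := by omega
        rw [h2, h3]
        ring
      omega
    · intro p
      have h1 : dfaRun δ p u ∈ T.image (fun p => dfaRun δ p u) :=
        Finset.mem_image_of_mem _ (by rw [hTuniv]; exact Finset.mem_univ p)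
      rw [hTu] at h1
      simpa using h1
  · intro S hSne
    obtain ⟨w, hwl, hw⟩ := reach n S hSne (by omega)
    exact ⟨w, hwl, hw⟩
end

section
/- There exists a 1-contracting DFA that is not synchronizing: the 4-state automaton with states {1,2,3,4}, letters a swapping 1↔2 and 3↔4, b swapping 2↔3 and 1↔4, and c sending 1 to 3 and fixing 2,3,4, admits the 1-contracting collection {c, ca, cab, cb} (excluding states 1,2,3,4 respectively), yet no word maps {1,2} to a singleton. -/
/-- The automaton of Example 3 (states `0,…,3` stand for `1,…,4`): letter `0` (= `a`)
    swaps `1↔2` and `3↔4`, letter `1` (= `b`) swaps `2↔3` and `1↔4`, letter `2` (= `c`)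
    sends `1` to `3` and fixes the other states. -/
def exAut (q : Fin 4) (x : Fin 3) : Fin 4 :=
  if x = 0 then (if q = 0 then 1 else if q = 1 then 0 else if q = 2 then 3 else 2)
  else if x = 1 then (if q = 1 then 2 else if q = 2 then 1 else if q = 0 then 3 else 0)
  else (if q = 0 then 2 else q)

def adjEx (p q : Fin 4) : Prop := (p.val + 1) % 4 = q.val ∨ (q.val + 1) % 4 = p.val

instance (p q : Fin 4) : Decidable (adjEx p q) := by
  unfold adjEx; infer_instance

lemma adjEx_step : ∀ (x : Fin 3) (p q : Fin 4), adjEx p q → adjEx (exAut p x) (exAut q x) := by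
  decide

lemma adjEx_run (w : List (Fin 3)) : ∀ p q : Fin 4, adjEx p q →
    adjEx (dfaRun exAut p w) (dfaRun exAut q w) := by
  induction w with
  | nil => intro p q h; exact h
  | cons x w ih =>
    intro p q h
    exact ih _ _ (adjEx_step x p q h)

/-- This automaton is `1`-contracting via the collection `{c, ca, cab, cb}`
    (excluding states `1,2,3,4` respectively), yet not synchronizing: no word
    collapses the pair `{1,2}`. -/
theorem stmt18 :
    Finset.univ.image (fun p => dfaRun exAut p [2]) = Finset.univ \ {0} ∧
    Finset.univ.image (fun p => dfaRun exAut p [2, 0]) = Finset.univ \ {1} ∧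
    Finset.univ.image (fun p => dfaRun exAut p [2, 0, 1]) = Finset.univ \ {2} ∧
    Finset.univ.image (fun p => dfaRun exAut p [2, 1]) = Finset.univ \ {3} ∧
    ∀ w : List (Fin 3), dfaRun exAut 0 w ≠ dfaRun exAut 1 w := by
  refine ⟨by decide, by decide, by decide, by decide, ?_⟩
  intro w h
  have := adjEx_run w 0 1 (by decide)
  rw [h] at this
  rcases this with h' | h' <;> omega
end

section
/- Let A be an n-state DFA with a 1-contracting collection W whose state map σ_W is a cyclic permutation, and for 1 ≤ k ≤ n−1 define S_{k,i} recursively as in the paper (images under w_i of those sets in the previous level containing the 2-element preimage of the contracting state of w_i, starting from {Q}). Then S_{k,i} equals exactly the family of all subsets S ⊆ Q of size n−k with q_i^c ∈ S and q_i ∉ S; in particular |S_{k,i}| = C(n−2, n−k−1). -/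
/-- The preimage `δ⁻¹(σ q, w q)` of the contracting state of the word excluding `q`. -/
def contrPre {Q A : Type*} [Fintype Q] [DecidableEq Q]
    (δ : Q → A → Q) (w : Q → List A) (σ : Q → Q) (q : Q) : Finset Q :=
  Finset.univ.filter (fun p => dfaRun δ p (w q) = σ q)

/-- The families `T_k` of the paper: `T₀ = {Q}` and
    `T_{k+1} = ⋃ᵢ {δ(S, wᵢ) : S ∈ T_k, δ⁻¹(qᵢᶜ, wᵢ) ⊆ S}`. -/
def Tfam {Q A : Type*} [Fintype Q] [DecidableEq Q]
    (δ : Q → A → Q) (w : Q → List A) (σ : Q → Q) : ℕ → Finset (Finset Q)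
  | 0 => {Finset.univ}
  | k + 1 =>
    Finset.univ.biUnion fun i : Q =>
      ((Tfam δ w σ k).filter (fun S => contrPre δ w σ i ⊆ S)).image
        (fun S => S.image (fun p => dfaRun δ p (w i)))

/-- The families `S_{k,i}` of the paper, for `k ≥ 1`:
    `S_{k,i} = {δ(S, wᵢ) : S ∈ U_{k−1,i}}` where `U_{k−1,i}` consists of the members of
    `T_{k−1}` containing `δ⁻¹(qᵢᶜ, wᵢ)`. -/
def Sfam {Q A : Type*} [Fintype Q] [DecidableEq Q]
    (δ : Q → A → Q) (w : Q → List A) (σ : Q → Q) (k : ℕ) (i : Q) : Finset (Finset Q) :=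
  ((Tfam δ w σ (k - 1)).filter (fun S => contrPre δ w σ i ⊆ S)).image
    (fun S => S.image (fun p => dfaRun δ p (w i)))

lemma exists_enter {Q : Type*} [Fintype Q] [DecidableEq Q] {σ : Q → Q}
    (hcyc : IsCyclicMap σ) {S : Finset Q} (h1 : S.Nonempty) (h2 : S ≠ Finset.univ) :
    ∃ i, i ∉ S ∧ σ i ∈ S := by
  set n := Fintype.card Q with hn
  obtain ⟨q, hq⟩ : ∃ q, q ∉ S := by
    by_contra h
    push_neg at h
    exact h2 (Finset.eq_univ_iff_forall.mpr h)
  obtain ⟨p, hp⟩ := h1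
  have key : ∀ a b : ℕ, a < b → b < n → σ^[a] q ≠ σ^[b] q := by
    intro a b hab hbn heq
    have hiter : σ^[b - a] (σ^[a] q) = σ^[a] q := by
      rw [← Function.iterate_add_apply, Nat.sub_add_cancel hab.le, ← heq]
    exact hcyc.2 (σ^[a] q) (b - a) (by omega) (by omega) hiter
  have hinj : Function.Injective (fun m : Fin n => σ^[(m : ℕ)] q) := by
    intro a b hab
    by_contra hne
    have hne' : (a : ℕ) ≠ (b : ℕ) := fun e => hne (Fin.ext e)
    rcases Nat.lt_or_ge (a : ℕ) (b : ℕ) with h | h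
    · exact key a b h b.isLt hab
    · exact key b a (by omega) a.isLt hab.symm
  have hbij : Function.Bijective (fun m : Fin n => σ^[(m : ℕ)] q) :=
    (Fintype.bijective_iff_injective_and_card _).mpr ⟨hinj, by simp [hn]⟩
  obtain ⟨m, hm⟩ := hbij.surjective p
  have hm' : σ^[(m : ℕ)] q = p := hm
  have hm1 : 1 ≤ (m : ℕ) := by
    rcases Nat.eq_zero_or_pos (m : ℕ) with h | h
    · exfalso
      apply hq
      rw [h] at hm'
      simp only [Function.iterate_zero, id_eq] at hm'
      rw [hm']
      exact hp
    · exact h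
  have hex : ∃ m' : ℕ, 1 ≤ m' ∧ σ^[m'] q ∈ S := ⟨m, hm1, by rw [hm']; exact hp⟩
  classical
  obtain ⟨hm01, hm0S⟩ := Nat.find_spec hex
  refine ⟨σ^[Nat.find hex - 1] q, ?_, ?_⟩
  · rcases Nat.eq_or_lt_of_le hm01 with h | h
    · rw [← h]
      simpa using hq
    · intro hmem
      have := Nat.find_min hex (show Nat.find hex - 1 < Nat.find hex by omega)
      exact this ⟨by omega, hmem⟩
  · have h2 : σ (σ^[Nat.find hex - 1] q) = σ^[Nat.find hex] q := by
      conv_rhs => rw [show Nat.find hex = (Nat.find hex - 1) + 1 by omega]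
      rw [Function.iterate_succ_apply']
    rw [h2]
    exact hm0S

lemma count_aux {Q : Type*} [Fintype Q] [DecidableEq Q] (a i : Q) (hne : a ≠ i)
    (m : ℕ) (hm1 : 1 ≤ m) :
    (Finset.univ.powerset.filter (fun S => S.card = m ∧ a ∈ S ∧ i ∉ S)).card
      = Nat.choose (Fintype.card Q - 2) (m - 1) := by
  set D : Finset Q := (Finset.univ.erase i).erase a with hD
  have hamem : a ∈ Finset.univ.erase i := Finset.mem_erase.mpr ⟨hne, Finset.mem_univ _⟩
  have hDcard : D.card = Fintype.card Q - 2 := by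
    rw [hD, Finset.card_erase_of_mem hamem, Finset.card_erase_of_mem (Finset.mem_univ i),
      Finset.card_univ]
    omega
  have heq : Finset.univ.powerset.filter (fun S => S.card = m ∧ a ∈ S ∧ i ∉ S)
      = (D.powersetCard (m - 1)).image (insert a) := by
    ext S
    simp only [Finset.mem_filter, Finset.mem_powerset, Finset.mem_image,
      Finset.mem_powersetCard]
    constructor
    · rintro ⟨-, hcard, haS, hiS⟩
      refine ⟨S.erase a, ⟨?_, ?_⟩, Finset.insert_erase haS⟩
      · intro p hp
        rw [Finset.mem_erase] at hp
        exact Finset.mem_erase.mpr ⟨hp.1,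
          Finset.mem_erase.mpr ⟨fun h => hiS (h ▸ hp.2), Finset.mem_univ _⟩⟩
      · rw [Finset.card_erase_of_mem haS, hcard]
    · rintro ⟨T, ⟨hTD, hTcard⟩, rfl⟩
      have haT : a ∉ T := fun h => (Finset.mem_erase.mp (hTD h)).1 rfl
      refine ⟨Finset.subset_univ _, ?_, Finset.mem_insert_self _ _, ?_⟩
      · rw [Finset.card_insert_of_notMem haT, hTcard]
        omega
      · intro h
        rcases Finset.mem_insert.mp h with h | h
        · exact hne h.symm
        · exact (Finset.mem_erase.mp (Finset.mem_erase.mp (hTD h)).2).1 rfl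
  rw [heq, Finset.card_image_of_injOn, Finset.card_powersetCard, hDcard]
  intro T hT T' hT' hTT'
  rw [Finset.mem_coe, Finset.mem_powersetCard] at hT hT'
  have haT : a ∉ T := fun h => (Finset.mem_erase.mp (hT.1 h)).1 rfl
  have haT' : a ∉ T' := fun h => (Finset.mem_erase.mp (hT'.1 h)).1 rfl
  rw [← Finset.erase_insert haT, hTT', Finset.erase_insert haT']

section Main
variable {Q A : Type*} [Fintype Q] [DecidableEq Q]
variable (δ : Q → A → Q) (w : Q → List A) (σ : Q → Q)

variable {Q A : Type*} [Fintype Q] [DecidableEq Q]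
variable (δ : Q → A → Q) (w : Q → List A) (σ : Q → Q)

lemma f_ne (hdef : ∀ q : Q, Finset.univ.image (fun p => dfaRun δ p (w q)) = Finset.univ \ {q})
    (i p : Q) : dfaRun δ p (w i) ≠ i := by
  intro h
  have : i ∈ Finset.univ.image (fun p => dfaRun δ p (w i)) :=
    Finset.mem_image.mpr ⟨p, Finset.mem_univ p, h⟩
  rw [hdef i] at this
  simp at this

lemma fiber_card
    (hdef : ∀ q : Q, Finset.univ.image (fun p => dfaRun δ p (w q)) = Finset.univ \ {q})
    (hcontr : ∀ q : Q, (contrPre δ w σ q).card = 2) (i y : Q) :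
    (Finset.univ.filter (fun p => dfaRun δ p (w i) = y)).card
      = if y = σ i then 2 else if y = i then 0 else 1 := by
  set n := Fintype.card Q with hn
  set c : Q → ℕ := fun y => (Finset.univ.filter (fun p => dfaRun δ p (w i) = y)).card with hc
  have hci : c i = 0 := by
    rw [hc]
    simp only [Finset.card_eq_zero, Finset.filter_eq_empty_iff]
    intro p _
    exact f_ne δ w hdef i p
  have hcσ : c (σ i) = 2 := by
    have := hcontr i
    simpa [contrPre, hc] using this
  have hσi : σ i ≠ i := by
    intro h
    rw [h, hci] at hcσ
    omega
  have hone : ∀ z : Q, z ≠ i → 1 ≤ c z := by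
    intro z hz
    have : z ∈ Finset.univ.image (fun p => dfaRun δ p (w i)) := by
      rw [hdef i]; simp [hz]
    obtain ⟨p, -, hp⟩ := Finset.mem_image.mp this
    exact Finset.card_pos.mpr ⟨p, Finset.mem_filter.mpr ⟨Finset.mem_univ p, hp⟩⟩
  have hsum : ∑ z ∈ Finset.univ, c z = n := by
    rw [hn, ← Finset.card_univ]
    exact (Finset.card_eq_sum_card_fiberwise (fun p _ => Finset.mem_univ (dfaRun δ p (w i)))).symm
  set s : Finset Q := (Finset.univ.erase i).erase (σ i) with hs
  have hσmem : σ i ∈ Finset.univ.erase i := Finset.mem_erase.mpr ⟨hσi, Finset.mem_univ _⟩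
  have h1 : ∑ z ∈ Finset.univ.erase i, c z + c i = n := by
    rw [Finset.sum_erase_add _ _ (Finset.mem_univ i)]; exact hsum
  have h2 : ∑ z ∈ s, c z + c (σ i) = ∑ z ∈ Finset.univ.erase i, c z := by
    rw [hs, Finset.sum_erase_add _ _ hσmem]
  have hcards : s.card = n - 2 := by
    rw [hs, Finset.card_erase_of_mem hσmem, Finset.card_erase_of_mem (Finset.mem_univ i),
      Finset.card_univ]
    omega
  have hzne : ∀ z ∈ s, z ≠ σ i ∧ z ≠ i := by
    intro z hz
    rw [hs, Finset.mem_erase, Finset.mem_erase] at hz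
    exact ⟨hz.1, hz.2.1⟩
  have hall : ∀ z ∈ s, c z = 1 := by
    by_contra hcon
    push_neg at hcon
    obtain ⟨z0, hz0s, hz0⟩ := hcon
    have hlt : ∑ z ∈ s, (1 : ℕ) < ∑ z ∈ s, c z := by
      apply Finset.sum_lt_sum
      · intro z hz; exact hone z (hzne z hz).2
      · refine ⟨z0, hz0s, ?_⟩
        have := hone z0 (hzne z0 hz0s).2
        omega
    rw [Finset.sum_const, smul_eq_mul, mul_one] at hlt
    omega
  by_cases hy1 : y = σ i
  · rw [hy1, if_pos rfl]; exact hcσ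
  by_cases hy2 : y = i
  · rw [if_neg hy1, hy2, if_pos rfl]; exact hci
  · rw [if_neg hy1, if_neg hy2]
    exact hall y (Finset.mem_erase.mpr ⟨hy1, Finset.mem_erase.mpr ⟨hy2, Finset.mem_univ _⟩⟩)

lemma sigma_ne
    (hdef : ∀ q : Q, Finset.univ.image (fun p => dfaRun δ p (w q)) = Finset.univ \ {q})
    (hcontr : ∀ q : Q, (contrPre δ w σ q).card = 2) (i : Q) : σ i ≠ i := by
  have h := hcontr i
  have hne : (contrPre δ w σ i).Nonempty := Finset.card_pos.mp (by omega)
  obtain ⟨p, hp⟩ := hne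
  simp only [contrPre, Finset.mem_filter] at hp
  intro h'
  exact f_ne δ w hdef i p (hp.2.trans h')

lemma f_inj
    (hdef : ∀ q : Q, Finset.univ.image (fun p => dfaRun δ p (w q)) = Finset.univ \ {q})
    (hcontr : ∀ q : Q, (contrPre δ w σ q).card = 2) (i p p' : Q)
    (h : dfaRun δ p (w i) = dfaRun δ p' (w i)) (hne : dfaRun δ p (w i) ≠ σ i) : p = p' := by
  have hc := fiber_card δ w σ hdef hcontr i (dfaRun δ p (w i))
  rw [if_neg hne, if_neg (f_ne δ w hdef i p)] at hc
  have hp : p ∈ Finset.univ.filter (fun q => dfaRun δ q (w i) = dfaRun δ p (w i)) :=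
    Finset.mem_filter.mpr ⟨Finset.mem_univ _, rfl⟩
  have hp' : p' ∈ Finset.univ.filter (fun q => dfaRun δ q (w i) = dfaRun δ p (w i)) :=
    Finset.mem_filter.mpr ⟨Finset.mem_univ _, h.symm⟩
  exact Finset.card_le_one.mp (le_of_eq hc) p hp p' hp'


lemma image_facts
    (hdef : ∀ q : Q, Finset.univ.image (fun p => dfaRun δ p (w q)) = Finset.univ \ {q})
    (hcontr : ∀ q : Q, (contrPre δ w σ q).card = 2) (i : Q) (S : Finset Q)
    (hS : contrPre δ w σ i ⊆ S) :
    (S.image (fun p => dfaRun δ p (w i))).card = S.card - 1 ∧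
    σ i ∈ S.image (fun p => dfaRun δ p (w i)) ∧
    i ∉ S.image (fun p => dfaRun δ p (w i)) := by
  have hne : (contrPre δ w σ i).Nonempty := Finset.card_pos.mp (by rw [hcontr i]; omega)
  obtain ⟨p₀, hp₀⟩ := hne
  have hp₀S : p₀ ∈ S := hS hp₀
  have hfp₀ : dfaRun δ p₀ (w i) = σ i := by
    simpa [contrPre] using hp₀
  have hσmem : σ i ∈ S.image (fun p => dfaRun δ p (w i)) :=
    Finset.mem_image.mpr ⟨p₀, hp₀S, hfp₀⟩
  have himem : i ∉ S.image (fun p => dfaRun δ p (w i)) := by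
    intro h
    obtain ⟨p, -, hp⟩ := Finset.mem_image.mp h
    exact f_ne δ w hdef i p hp
  refine ⟨?_, hσmem, himem⟩
  have himg : S.image (fun p => dfaRun δ p (w i)) =
      insert (σ i) ((S \ contrPre δ w σ i).image (fun p => dfaRun δ p (w i))) := by
    ext y
    simp only [Finset.mem_image, Finset.mem_insert, Finset.mem_sdiff]
    constructor
    · rintro ⟨p, hpS, rfl⟩
      by_cases hp : p ∈ contrPre δ w σ i
      · left
        simpa [contrPre] using hp
      · right; exact ⟨p, ⟨hpS, hp⟩, rfl⟩
    · rintro (rfl | ⟨p, ⟨hpS, -⟩, rfl⟩)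
      · exact ⟨p₀, hp₀S, hfp₀⟩
      · exact ⟨p, hpS, rfl⟩
  have hnotmem : σ i ∉ (S \ contrPre δ w σ i).image (fun p => dfaRun δ p (w i)) := by
    intro h
    obtain ⟨p, hp, hfp⟩ := Finset.mem_image.mp h
    rw [Finset.mem_sdiff] at hp
    exact hp.2 (by simp [contrPre, hfp])
  have hinjOn : Set.InjOn (fun p => dfaRun δ p (w i)) ↑(S \ contrPre δ w σ i) := by
    intro p hp p' hp' h
    simp only [Finset.coe_sdiff, Set.mem_diff, Finset.mem_coe] at hp hp'
    refine f_inj δ w σ hdef hcontr i p p' h ?_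
    intro hc
    exact hp.2 (by simp [contrPre, hc])
  have hSc : 2 ≤ S.card := by
    have := Finset.card_le_card hS
    rw [hcontr i] at this
    omega
  rw [himg, Finset.card_insert_of_notMem hnotmem, Finset.card_image_of_injOn hinjOn,
    Finset.card_sdiff_of_subset hS, hcontr i]
  omega

lemma preimage_facts
    (hdef : ∀ q : Q, Finset.univ.image (fun p => dfaRun δ p (w q)) = Finset.univ \ {q})
    (hcontr : ∀ q : Q, (contrPre δ w σ q).card = 2) (i : Q) (T : Finset Q)
    (hiT : i ∉ T) (hσT : σ i ∈ T) :
    contrPre δ w σ i ⊆ Finset.univ.filter (fun p => dfaRun δ p (w i) ∈ T) ∧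
    (Finset.univ.filter (fun p => dfaRun δ p (w i) ∈ T)).image (fun p => dfaRun δ p (w i)) = T ∧
    (Finset.univ.filter (fun p => dfaRun δ p (w i) ∈ T)).card = T.card + 1 := by
  set S := Finset.univ.filter (fun p => dfaRun δ p (w i) ∈ T) with hSdef
  have hsub : contrPre δ w σ i ⊆ S := by
    intro p hp
    simp only [contrPre, Finset.mem_filter] at hp
    exact Finset.mem_filter.mpr ⟨Finset.mem_univ _, hp.2 ▸ hσT⟩
  have himg : S.image (fun p => dfaRun δ p (w i)) = T := by
    ext y
    constructor
    · intro h
      obtain ⟨p, hp, hfp⟩ := Finset.mem_image.mp h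
      rw [hSdef, Finset.mem_filter] at hp
      exact hfp ▸ hp.2
    · intro hy
      have hyi : y ≠ i := fun h => hiT (h ▸ hy)
      have : y ∈ Finset.univ.image (fun p => dfaRun δ p (w i)) := by
        rw [hdef i]; simp [hyi]
      obtain ⟨p, -, hp⟩ := Finset.mem_image.mp this
      exact Finset.mem_image.mpr ⟨p, Finset.mem_filter.mpr ⟨Finset.mem_univ _, hp ▸ hy⟩, hp⟩
  refine ⟨hsub, himg, ?_⟩
  have hcard : S.card = ∑ y ∈ T, (S.filter (fun p => dfaRun δ p (w i) = y)).card :=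
    Finset.card_eq_sum_card_fiberwise (fun p hp => (Finset.mem_filter.mp hp).2)
  have hfib : ∀ y ∈ T, (S.filter (fun p => dfaRun δ p (w i) = y)).card
      = (Finset.univ.filter (fun p => dfaRun δ p (w i) = y)).card := by
    intro y hy
    congr 1
    ext p
    simp only [hSdef, Finset.filter_filter, Finset.mem_filter, Finset.mem_univ, true_and]
    constructor
    · rintro ⟨-, h⟩; exact h
    · intro h; exact ⟨h ▸ hy, h⟩
  have hsum2 : ∑ y ∈ T, (S.filter (fun p => dfaRun δ p (w i) = y)).card
      = ∑ y ∈ T, (Finset.univ.filter (fun p => dfaRun δ p (w i) = y)).card :=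
    Finset.sum_congr rfl hfib
  have hsplit : ∑ y ∈ T.erase (σ i), (Finset.univ.filter (fun p => dfaRun δ p (w i) = y)).card
      + (Finset.univ.filter (fun p => dfaRun δ p (w i) = σ i)).card
      = ∑ y ∈ T, (Finset.univ.filter (fun p => dfaRun δ p (w i) = y)).card :=
    Finset.sum_erase_add _ _ hσT
  have hσfib : (Finset.univ.filter (fun p => dfaRun δ p (w i) = σ i)).card = 2 := by
    rw [fiber_card δ w σ hdef hcontr i (σ i), if_pos rfl]
  have hrest : ∀ y ∈ T.erase (σ i),
      (Finset.univ.filter (fun p => dfaRun δ p (w i) = y)).card = 1 := by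
    intro y hy
    rw [Finset.mem_erase] at hy
    have hyi : y ≠ i := fun h => hiT (h ▸ hy.2)
    rw [fiber_card δ w σ hdef hcontr i y, if_neg hy.1, if_neg hyi]
  have hrestsum : ∑ y ∈ T.erase (σ i),
      (Finset.univ.filter (fun p => dfaRun δ p (w i) = y)).card = T.card - 1 := by
    rw [Finset.sum_congr rfl hrest, Finset.sum_const, smul_eq_mul, mul_one,
      Finset.card_erase_of_mem hσT]
  have hT1 : 1 ≤ T.card := Finset.card_pos.mpr ⟨σ i, hσT⟩
  omega


lemma Sfam_eq
    (hdef : ∀ q : Q, Finset.univ.image (fun p => dfaRun δ p (w q)) = Finset.univ \ {q})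
    (hcontr : ∀ q : Q, (contrPre δ w σ q).card = 2)
    (hcyc : IsCyclicMap σ) :
    ∀ k : ℕ, 1 ≤ k → k ≤ Fintype.card Q - 1 → ∀ i : Q,
      Sfam δ w σ k i = Finset.univ.powerset.filter
        (fun S => S.card = Fintype.card Q - k ∧ σ i ∈ S ∧ i ∉ S) := by
  intro k
  induction k with
  | zero => omega
  | succ k ih =>
    intro _ hk2 i
    have hσi : σ i ≠ i := sigma_ne δ w σ hdef hcontr i
    rcases Nat.eq_zero_or_pos k with rfl | hk
    · -- base case k+1 = 1
      have hn2 : 2 ≤ Fintype.card Q := by omega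
      have h1 : Sfam δ w σ 1 i = {Finset.univ \ ({i} : Finset Q)} := by
        rw [show Sfam δ w σ 1 i = ((Tfam δ w σ 0).filter (fun S => contrPre δ w σ i ⊆ S)).image
          (fun S => S.image (fun p => dfaRun δ p (w i))) from rfl]
        rw [show Tfam δ w σ 0 = {Finset.univ} from rfl]
        rw [Finset.filter_singleton, if_pos (Finset.subset_univ _), Finset.image_singleton,
          hdef i]
      rw [h1]
      ext S
      simp only [Finset.mem_singleton, Finset.mem_filter, Finset.mem_powerset]
      constructor
      · rintro rfl
        refine ⟨Finset.subset_univ _, ?_, ?_, by simp⟩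
        · rw [Finset.card_sdiff_of_subset (by simp), Finset.card_univ, Finset.card_singleton]
        · simp [hσi]
      · rintro ⟨-, hcard, -, hiS⟩
        have hsub : S ⊆ Finset.univ \ {i} := by
          intro p hp
          simp only [Finset.mem_sdiff, Finset.mem_univ, Finset.mem_singleton, true_and]
          intro h
          exact hiS (h ▸ hp)
        have hc2 : (Finset.univ \ ({i} : Finset Q)).card = Fintype.card Q - 1 := by
          rw [Finset.card_sdiff_of_subset (by simp), Finset.card_univ, Finset.card_singleton]
        exact Finset.eq_of_subset_of_card_le hsub (by omega)
    · -- inductive step, k ≥ 1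
      have hk2' : k + 2 ≤ Fintype.card Q := by omega
      have hTk : Tfam δ w σ k = Finset.univ.powerset.filter
          (fun S => S.card = Fintype.card Q - k) := by
        obtain ⟨m, rfl⟩ : ∃ m, k = m + 1 := ⟨k - 1, by omega⟩
        have hT : Tfam δ w σ (m + 1) = Finset.univ.biUnion
            (fun j => Sfam δ w σ (m + 1) j) := rfl
        rw [hT]
        ext S
        simp only [Finset.mem_biUnion, Finset.mem_univ, true_and, Finset.mem_filter,
          Finset.mem_powerset]
        constructor
        · rintro ⟨j, hj⟩
          rw [ih (by omega) (by omega) j] at hj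
          simp only [Finset.mem_filter, Finset.mem_powerset] at hj
          exact ⟨hj.1, hj.2.1⟩
        · rintro ⟨hsub, hcard⟩
          have hSne : S.Nonempty := Finset.card_pos.mp (by omega)
          have hSnu : S ≠ Finset.univ := by
            intro h
            rw [h, Finset.card_univ] at hcard
            omega
          obtain ⟨j, hj1, hj2⟩ := exists_enter hcyc hSne hSnu
          refine ⟨j, ?_⟩
          rw [ih (by omega) (by omega) j]
          simp only [Finset.mem_filter, Finset.mem_powerset]
          exact ⟨hsub, hcard, hj2, hj1⟩
      have hSfam : Sfam δ w σ (k + 1) i = ((Tfam δ w σ k).filter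
          (fun S => contrPre δ w σ i ⊆ S)).image
          (fun S => S.image (fun p => dfaRun δ p (w i))) := rfl
      rw [hSfam]
      ext T
      simp only [Finset.mem_image, Finset.mem_filter, Finset.mem_powerset]
      constructor
      · rintro ⟨S, hS, rfl⟩
        rw [hTk] at hS
        simp only [Finset.mem_filter, Finset.mem_powerset] at hS
        obtain ⟨⟨-, hcard⟩, hcsub⟩ := hS
        obtain ⟨h1, h2, h3⟩ := image_facts δ w σ hdef hcontr i S hcsub
        refine ⟨Finset.subset_univ _, ?_, h2, h3⟩
        rw [h1, hcard]
        omega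
      · rintro ⟨-, hcard, hσT, hiT⟩
        obtain ⟨h1, h2, h3⟩ := preimage_facts δ w σ hdef hcontr i T hiT hσT
        refine ⟨Finset.univ.filter (fun p => dfaRun δ p (w i) ∈ T), ?_, h2⟩
        rw [hTk]
        simp only [Finset.mem_filter, Finset.mem_powerset]
        exact ⟨⟨Finset.subset_univ _, by rw [h3, hcard]; omega⟩, h1⟩


end Main

/-- `S_{k,i}` equals the family of all subsets `S ⊆ Q` of size `n − k` with
    `qᵢᶜ ∈ S` and `qᵢ ∉ S`; in particular `|S_{k,i}| = C(n−2, n−k−1)`. -/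
theorem stmt19 {Q A : Type*} [Fintype Q] [DecidableEq Q]
    (δ : Q → A → Q) (w : Q → List A) (σ : Q → Q)
    (hdef : ∀ q : Q, Finset.univ.image (fun p => dfaRun δ p (w q)) = Finset.univ \ {q})
    (hcontr : ∀ q : Q, (contrPre δ w σ q).card = 2)
    (hcyc : IsCyclicMap σ)
    (k : ℕ) (hk1 : 1 ≤ k) (hk2 : k ≤ Fintype.card Q - 1) (i : Q) :
    Sfam δ w σ k i =
        Finset.univ.powerset.filter
          (fun S => S.card = Fintype.card Q - k ∧ σ i ∈ S ∧ i ∉ S) ∧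
      (Sfam δ w σ k i).card = Nat.choose (Fintype.card Q - 2) (Fintype.card Q - k - 1) := by
  have hmain := Sfam_eq δ w σ hdef hcontr hcyc k hk1 hk2 i
  refine ⟨hmain, ?_⟩
  rw [hmain]
  have hσi : σ i ≠ i := sigma_ne δ w σ hdef hcontr i
  have hn2 : 2 ≤ Fintype.card Q := by omega
  have := count_aux (σ i) i hσi (Fintype.card Q - k) (by omega)
  rw [this]
end
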